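/- arXiv:2502.03939 — 5 statements merged into one kernel-verified Lean document; each statement's English description precedes it below -/
import Mathlib

section
/- For every n ≥ 3, every k ≥ 3, and every deterministic algorithm A, there exist an initial configuration of k robots on the n-ring and a fair sequential (SEQ) scheduler (together with adversarial direction choices) such that the resulting execution of A never solves Gathering. In particular, Gathering on rings with k ≥ 3 robots is unsolvable under a general sequential scheduler. -/
/-!
Robots on an anonymous `n`-ring (the cycle on `ZMod n`).  A configuration of `k`
robots is a function `Fin k → ZMod n` (several robots may share a vertex: a
multiplicity).  Robots are anonymous, oblivious and disoriented: an algorithm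
only sees the set of occupied vertices expressed as offsets in the robot's own
local frame, whose orientation (reflection) is chosen by the adversary at each
activation.  A sequential scheduler activates one robot per round.
-/

namespace RobotRing

/-- A configuration of `k` robots on the `n`-ring: robot `i` sits on vertex `C i`. -/
abbrev Config (n k : ℕ) := Fin k → ZMod n

/-- The set of occupied vertices of a configuration. -/
def occ {n k : ℕ} (C : Config n k) : Set (ZMod n) := Set.range C

/-- A boolean orientation viewed as the ring element `±1`. -/
def sgn {n : ℕ} (e : Bool) : ZMod n := if e then 1 else -1

/-- The local view of a robot located at `p` whose local frame has orientation `e`: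
the occupied vertices, expressed as offsets in the robot's local frame
(robots cannot detect multiplicities, and perceive positions only relative to
themselves, up to reflection). -/
def view {n k : ℕ} (C : Config n k) (p : ZMod n) (e : Bool) : Set (ZMod n) :=
  {d : ZMod n | p + sgn e * d ∈ occ C}

/-- A deterministic algorithm: to every local view it assigns a move,
`0` = stay still (nil), `±1` = move to an adjacent vertex, in the local frame. -/
abbrev Algo (n : ℕ) := Set (ZMod n) → SignType

/-- One activation: robot `i` is activated, the adversary chooses the orientation
`e` of its local frame (robots are disoriented and chirality-free, so a
reflection-ambiguous move direction is resolved by the adversary), and the robot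
moves instantaneously as the algorithm prescribes on its view. -/
def step {n k : ℕ} (A : Algo n) (C : Config n k) (i : Fin k) (e : Bool) : Config n k :=
  Function.update C i (C i + sgn e * (SignType.cast (A (view C (C i) e)) : ZMod n))

/-- The execution of algorithm `A` from the initial configuration `C₀` under the
sequential scheduler `sched` (one robot per round) and the adversarial
orientation choices `env`. -/
def exec {n k : ℕ} (A : Algo n) (C₀ : Config n k) (sched : ℕ → Fin k) (env : ℕ → Bool) :
    ℕ → Config n k
  | 0 => C₀
  | t + 1 => step A (exec A C₀ sched env t) (sched t) (env t)

/-- Fairness of a sequential (SEQ) scheduler: every robot is activated infinitely often. -/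
def Fair {k : ℕ} (sched : ℕ → Fin k) : Prop :=
  ∀ (i : Fin k) (t : ℕ), ∃ t' ≥ t, sched t' = i

/-- A Round Robin scheduler: the `k` robots are activated one per round in a fixed
order which repeats forever (each robot is activated exactly once per epoch of
`k` consecutive rounds). -/
def IsRoundRobin {k : ℕ} (sched : ℕ → Fin k) : Prop :=
  ∃ π : Equiv.Perm (Fin k), ∀ (t : ℕ) (h : t % k < k), sched t = π ⟨t % k, h⟩

/-- The execution `E` solves Gathering: after finitely many rounds all robots
occupy one common vertex and no robot ever moves afterwards. -/
def Solves {n k : ℕ} (E : ℕ → Config n k) : Prop :=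
  ∃ T : ℕ, ∀ t ≥ T, (∀ i j : Fin k, E t i = E t j) ∧ E (t + 1) = E t

/-- The ring distance between two vertices of the `n`-ring. -/
def ringDist {n : ℕ} (a b : ZMod n) : ℕ := min (a - b).val (b - a).val


/-! ### Auxiliary machinery for the impossibility proof -/

section Aux

variable {n k : ℕ}

/-- Computation of a robot's view when the occupied set is a pair `{p, p + w}`. -/
lemma view_eq (C : Config n k) (p w : ZMod n) (hocc : occ C = {p, p + w}) (e : Bool) :
    view C p e = {0, sgn e * w} := by
  ext d
  simp only [view, Set.mem_setOf_eq, hocc, Set.mem_insert_iff, Set.mem_singleton_iff]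
  cases e <;> simp [sgn]
  rw [neg_eq_iff_eq_neg]

lemma cast_signtype (s : SignType) :
    (SignType.cast s : ZMod n) = 0 ∨ (SignType.cast s : ZMod n) = 1 ∨
      (SignType.cast s : ZMod n) = -1 := by
  cases s <;> simp

lemma one_ne_zero' (hn : 3 ≤ n) : (1 : ZMod n) ≠ 0 := by
  haveI : Fact (1 < n) := ⟨by omega⟩
  exact one_ne_zero

/-! #### Case A: the algorithm always crosses on an adjacent occupied pair.

The adversary keeps all robots on the two adjacent vertices `0` and `1`,
wiggling robots back and forth (each activated robot is forced to cross),
in an order (two "wigglings" per block, a helper robot from the opposite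
vertex escorting the lone robots) that keeps both vertices occupied forever. -/

/-- index wiggled first in block `(t / 4) % k` of the case-A schedule -/
def actI (k t : ℕ) : ℕ := if (t / 4) % k ≤ 1 then (t / 4) % k else 0

/-- index wiggled second in block `(t / 4) % k` of the case-A schedule -/
def midI (k t : ℕ) : ℕ := if (t / 4) % k ≤ 1 then 2 else (t / 4) % k

/-- the case-A schedule: in block `j` the pattern of activations is
`[actI, midI, midI, actI]` -/
def sA (k t : ℕ) : ℕ := if t % 4 = 0 ∨ t % 4 = 3 then actI k t else midI k t

/-- the case-A configuration at time `t`: robots `0, 1` based at vertex `0`,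
all other robots based at vertex `1`, with the currently wiggled robots
displaced to the opposite vertex. -/
def cfgA (n k : ℕ) (t : ℕ) : Fin k → ZMod n := fun i =>
  if t % 4 ≠ 0 ∧ ((i : ℕ) = actI k t ∨ (t % 4 = 2 ∧ (i : ℕ) = midI k t))
  then (if (i : ℕ) < 2 then 1 else 0)
  else (if (i : ℕ) < 2 then 0 else 1)

lemma actI_le (k t : ℕ) : actI k t ≤ 1 := by unfold actI; split_ifs <;> omega

lemma midI_ge (k t : ℕ) : 2 ≤ midI k t := by unfold midI; split_ifs <;> omega

lemma sA_lt (hk : 3 ≤ k) (t : ℕ) : sA k t < k := by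
  have h : (t / 4) % k < k := Nat.mod_lt _ (by omega)
  have := actI_le k t
  unfold sA midI; split_ifs <;> omega

lemma cfgA_succ (hk : 3 ≤ k) (t : ℕ) (i : Fin k) :
    cfgA n k (t + 1) i =
      if (i : ℕ) = sA k t then 1 - cfgA n k t i else cfgA n k t i := by
  have ha := actI_le k t
  have hm := midI_ge k t
  have hq : t % 4 = 0 ∨ t % 4 = 1 ∨ t % 4 = 2 ∨ t % 4 = 3 := by omega
  rcases hq with hq | hq | hq | hq
  · have e1 : (t + 1) % 4 = 1 := by omega
    have e2 : (t + 1) / 4 = t / 4 := by omega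
    have e3 : actI k (t+1) = actI k t := by unfold actI; rw [e2]
    have e4 : midI k (t+1) = midI k t := by unfold midI; rw [e2]
    simp only [cfgA, sA, e1, e3, e4, hq]
    norm_num
    split_ifs <;> first | rfl | omega | norm_num
  · have e1 : (t + 1) % 4 = 2 := by omega
    have e2 : (t + 1) / 4 = t / 4 := by omega
    have e3 : actI k (t+1) = actI k t := by unfold actI; rw [e2]
    have e4 : midI k (t+1) = midI k t := by unfold midI; rw [e2]
    simp only [cfgA, sA, e1, e3, e4, hq]
    norm_num
    split_ifs <;> first | rfl | omega | norm_num
  · have e1 : (t + 1) % 4 = 3 := by omega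
    have e2 : (t + 1) / 4 = t / 4 := by omega
    have e3 : actI k (t+1) = actI k t := by unfold actI; rw [e2]
    have e4 : midI k (t+1) = midI k t := by unfold midI; rw [e2]
    simp only [cfgA, sA, e1, e3, e4, hq]
    norm_num
    split_ifs <;> first | rfl | omega | norm_num
  · have e1 : (t + 1) % 4 = 0 := by omega
    simp only [cfgA, sA, e1, hq]
    norm_num
    split_ifs <;> first | rfl | omega | norm_num

lemma cfgA_val (t : ℕ) (i : Fin k) : cfgA n k t i = 0 ∨ cfgA n k t i = 1 := by
  unfold cfgA; split_ifs <;> simp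

lemma cfgA_zero (hk : 3 ≤ k) (t : ℕ) : ∃ i : Fin k, cfgA n k t i = 0 := by
  have ha := actI_le k t
  have hm := midI_ge k t
  by_cases h : actI k t = 0
  · refine ⟨⟨1, by omega⟩, ?_⟩
    unfold cfgA
    rw [if_neg (by rintro ⟨-, h1 | ⟨-, h2⟩⟩ <;> simp_all <;> omega), if_pos (by norm_num)]
  · refine ⟨⟨0, by omega⟩, ?_⟩
    unfold cfgA
    rw [if_neg (by rintro ⟨-, h1 | ⟨-, h2⟩⟩ <;> simp_all <;> omega), if_pos (by norm_num)]

lemma cfgA_one (hk : 3 ≤ k) (t : ℕ) : ∃ i : Fin k, cfgA n k t i = 1 := by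
  have ha := actI_le k t
  have hm := midI_ge k t
  by_cases h : t % 4 = 2
  · refine ⟨⟨actI k t, by omega⟩, ?_⟩
    unfold cfgA
    rw [if_pos (by exact ⟨by omega, Or.inl rfl⟩), if_pos (by simpa using by omega)]
  · refine ⟨⟨2, by omega⟩, ?_⟩
    unfold cfgA
    rw [if_neg (by rintro ⟨-, h1 | ⟨h2, -⟩⟩ <;> simp_all <;> omega), if_neg (by norm_num)]

lemma occ_cfgA (hk : 3 ≤ k) (t : ℕ) : occ (cfgA n k t) = ({0, 1} : Set (ZMod n)) := by
  ext x
  constructor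
  · rintro ⟨i, rfl⟩
    simpa using cfgA_val t i
  · rintro (rfl | rfl)
    · obtain ⟨i, hi⟩ := cfgA_zero (n := n) hk t; exact ⟨i, hi⟩
    · obtain ⟨i, hi⟩ := cfgA_one (n := n) hk t; exact ⟨i, hi⟩

/-- In case A, on an occupied pair `{0, 1}`, under either orientation the
activated robot crosses to the other vertex of the pair. -/
lemma step_pair (A : Algo n)
    (hp : (SignType.cast (A ({0, 1} : Set (ZMod n))) : ZMod n) = 1)
    (hm : (SignType.cast (A ({0, -1} : Set (ZMod n))) : ZMod n) = -1)
    (C : Config n k) (hocc : occ C = ({0, 1} : Set (ZMod n)))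
    (i : Fin k) (hi : C i = 0 ∨ C i = 1) (e : Bool) :
    step A C i e = Function.update C i (1 - C i) := by
  unfold step
  rcases hi with h | h <;> rw [h]
  · have hv := view_eq C 0 1 (by rw [hocc]; norm_num) e
    cases e
    · rw [show ((sgn false : ZMod n) * 1 = -1) by simp [sgn]] at hv
      rw [hv, hm]; norm_num [sgn]
    · rw [show ((sgn true : ZMod n) * 1 = 1) by simp [sgn]] at hv
      rw [hv, hp]; norm_num [sgn]
  · have hv := view_eq C 1 (-1) (by rw [hocc]; norm_num [Set.pair_comm]) e
    cases e
    · rw [show ((sgn false : ZMod n) * (-1) = 1) by simp [sgn]] at hv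
      rw [hv, hp]; norm_num [sgn]
    · rw [show ((sgn true : ZMod n) * (-1) = -1) by simp [sgn]] at hv
      rw [hv, hm]; norm_num [sgn]

lemma fairA (hk : 3 ≤ k) : Fair (fun t => (⟨sA k t, sA_lt hk t⟩ : Fin k)) := by
  intro i t
  refine ⟨4 * (k * (t + 1) + (i : ℕ)) + (if (i : ℕ) ≤ 1 then 0 else 1), ?_, ?_⟩
  · have h1 : t + 1 ≤ k * (t + 1) := Nat.le_mul_of_pos_left (t + 1) (by omega)
    split_ifs <;> omega
  · have hi := i.isLt
    have hmod : (k * (t + 1) + (i : ℕ)) % k = (i : ℕ) := by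
      rw [Nat.mul_add_mod]; exact Nat.mod_eq_of_lt hi
    apply Fin.ext
    simp only []
    by_cases h : (i : ℕ) ≤ 1
    · rw [if_pos h]
      have e1 : (4 * (k * (t + 1) + (i : ℕ)) + 0) % 4 = 0 := by omega
      have e2 : (4 * (k * (t + 1) + (i : ℕ)) + 0) / 4 = k * (t + 1) + (i : ℕ) := by omega
      unfold sA actI
      rw [e1, e2, hmod]
      simp [h]
    · rw [if_neg h]
      have e1 : (4 * (k * (t + 1) + (i : ℕ)) + 1) % 4 = 1 := by omega
      have e2 : (4 * (k * (t + 1) + (i : ℕ)) + 1) / 4 = k * (t + 1) + (i : ℕ) := by omega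
      unfold sA midI
      rw [e1, e2, hmod]
      simp [h]

lemma fairRR (hk : 3 ≤ k) : Fair (fun t => (⟨t % k, Nat.mod_lt _ (by omega)⟩ : Fin k)) := by
  intro i t
  refine ⟨k * (t + 1) + (i : ℕ), ?_, ?_⟩
  · have h1 : t + 1 ≤ k * (t + 1) := Nat.le_mul_of_pos_left (t + 1) (by omega)
    omega
  · apply Fin.ext
    simp only []
    rw [Nat.mul_add_mod]
    exact Nat.mod_eq_of_lt i.isLt

/-! #### Case B: the adversary can always avoid the final merge. -/

-- The adversarial orientation choice in case B: when the configuration is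
-- "all robots but `i` on a common vertex, robot `i` adjacent to it", choose
-- the orientation under which robot `i` does not merge.
open Classical in
noncomputable def gB (A : Algo n) (C : Config n k) (i : Fin k) : Bool :=
  if (∃ c : ZMod n, (∀ j, j ≠ i → C j = c) ∧ C i = c - 1) then
    (if (SignType.cast (A ({0, 1} : Set (ZMod n))) : ZMod n) = 1 then false else true)
  else if (∃ c : ZMod n, (∀ j, j ≠ i → C j = c) ∧ C i = c + 1) then
    (if (SignType.cast (A ({0, 1} : Set (ZMod n))) : ZMod n) = 1 then true else false)
  else true

/-- The case-B execution, where the adversarial orientation choices are made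
adaptively (as a function of the current configuration). -/
noncomputable def DB (A : Algo n) (C₀ : Config n k) (sched : ℕ → Fin k)
    (g : Config n k → Fin k → Bool) : ℕ → Config n k
  | 0 => C₀
  | t + 1 => step A (DB A C₀ sched g t) (sched t) (g (DB A C₀ sched g t) (sched t))

lemma exec_DB (A : Algo n) (C₀ : Config n k) (sched : ℕ → Fin k)
    (g : Config n k → Fin k → Bool) (t : ℕ) :
    exec A C₀ sched (fun s => g (DB A C₀ sched g s) (sched s)) t = DB A C₀ sched g t := by
  induction t with
  | zero => rfl
  | succ t ih => rw [exec, DB, ih]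

/-- Key preservation lemma for case B: if the robots are not all on one vertex,
then after one activation (with the adaptive orientation choice `gB`) they are
still not all on one vertex. -/
lemma B_preserve (hn : 3 ≤ n) (hk : 3 ≤ k) (A : Algo n)
    (hA : ¬ ((SignType.cast (A ({0, 1} : Set (ZMod n))) : ZMod n) = 1 ∧
      (SignType.cast (A ({0, -1} : Set (ZMod n))) : ZMod n) = -1))
    (C : Config n k) (hC : ¬ ∀ a b, C a = C b) (i : Fin k) :
    ¬ ∀ a b, step A C i (gB A C i) a = step A C i (gB A C i) b := by
  intro hconst
  set e := gB A C i with he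
  set C' := step A C i e with hC'
  obtain ⟨p, hpi⟩ : ∃ p : Fin k, p ≠ i := by
    by_cases h0 : i = ⟨0, by omega⟩
    · exact ⟨⟨1, by omega⟩, by rw [h0]; intro h; simpa using congrArg Fin.val h⟩
    · exact ⟨⟨0, by omega⟩, fun h => h0 h.symm⟩
  set c := C p with hcp
  have hCj : ∀ j, j ≠ i → C j = c := by
    intro j hj
    have h1 : C' j = C j := Function.update_of_ne hj _ _
    have h2 : C' p = C p := Function.update_of_ne hpi _ _
    rw [hcp, ← h1, ← h2]
    exact hconst j p
  have hCi : C i ≠ c := by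
    intro h
    apply hC
    have hall : ∀ a : Fin k, C a = c := by
      intro a
      by_cases ha : a = i
      · rw [ha, h]
      · exact hCj a ha
    intro a b
    rw [hall a, hall b]
  have hC'i : C' i = c := by
    have h2 : C' p = C p := Function.update_of_ne hpi _ _
    rw [hconst i p, h2]
  have hstep : C i + sgn e * (SignType.cast (A (view C (C i) e)) : ZMod n) = c := by
    rw [← hC'i, hC']; unfold step; rw [Function.update_self]
  have hd : c = C i + 1 ∨ c = C i + (-1) := by
    rcases cast_signtype (n := n) (A (view C (C i) e)) with h | h | h <;>
        rw [h] at hstep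
    · exact absurd (by rw [← hstep]; ring) hCi
    · rcases Bool.dichotomy e with hb | hb <;> rw [hb] at hstep
      · right; rw [← hstep]; simp [sgn]
      · left; rw [← hstep]; simp [sgn]
    · rcases Bool.dichotomy e with hb | hb <;> rw [hb] at hstep
      · left; rw [← hstep]; simp [sgn]
      · right; rw [← hstep]; simp [sgn]
  have hocc : ∀ x, x ∈ occ C ↔ x = C i ∨ x = c := by
    intro x
    constructor
    · rintro ⟨m, rfl⟩
      rcases eq_or_ne m i with rfl | hm
      · exact Or.inl rfl
      · exact Or.inr (hCj m hm)
    · rintro (rfl | rfl)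
      · exact ⟨i, rfl⟩
      · exact ⟨p, hcp.symm⟩
  by_cases hP1 : ∃ c' : ZMod n, (∀ j, j ≠ i → C j = c') ∧ C i = c' - 1
  · obtain ⟨c1, hall1, hi1⟩ := id hP1
    have hc1 : c1 = c := by rw [hcp, ← hall1 p hpi]
    rw [hc1] at hi1
    have hc : c = C i + 1 := by rw [hi1]; ring
    have hoccset : occ C = ({C i, C i + 1} : Set (ZMod n)) := by
      ext x
      rw [hocc x, ← hc]
      simp
    have he2 : e = if (SignType.cast (A ({0, 1} : Set (ZMod n))) : ZMod n) = 1
        then false else true := by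
      rw [he]; unfold gB; rw [if_pos hP1]
    by_cases hs : (SignType.cast (A ({0, 1} : Set (ZMod n))) : ZMod n) = 1
    · have he3 : e = false := by rw [he2, if_pos hs]
      have hv : view C (C i) false = ({0, -1} : Set (ZMod n)) := by
        have := view_eq C (C i) 1 hoccset false
        rwa [show ((sgn false : ZMod n) * 1 = -1) by simp [sgn]] at this
      rw [he3, hv] at hstep
      apply hA
      refine ⟨hs, ?_⟩
      have : C i + sgn false * (SignType.cast (A ({0, -1} : Set (ZMod n))) : ZMod n)
          = C i + 1 := by rw [hstep, hc]
      simp only [sgn, if_neg Bool.false_ne_true] at this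
      linear_combination -this
    · have he3 : e = true := by rw [he2, if_neg hs]
      have hv : view C (C i) true = ({0, 1} : Set (ZMod n)) := by
        have := view_eq C (C i) 1 hoccset true
        rwa [show ((sgn true : ZMod n) * 1 = 1) by simp [sgn]] at this
      rw [he3, hv] at hstep
      apply hs
      have : C i + sgn true * (SignType.cast (A ({0, 1} : Set (ZMod n))) : ZMod n)
          = C i + 1 := by rw [hstep, hc]
      simp only [sgn, if_pos] at this
      linear_combination this
  · have hc : c = C i + (-1) := by
      rcases hd with h | h
      · exact absurd ⟨c, hCj, by rw [h]; ring⟩ hP1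
      · exact h
    have hP2 : ∃ c' : ZMod n, (∀ j, j ≠ i → C j = c') ∧ C i = c' + 1 :=
      ⟨c, hCj, by rw [hc]; ring⟩
    have he2 : e = if (SignType.cast (A ({0, 1} : Set (ZMod n))) : ZMod n) = 1
        then true else false := by
      rw [he]; unfold gB; rw [if_neg hP1, if_pos hP2]
    have hoccset : occ C = ({C i, C i + (-1)} : Set (ZMod n)) := by
      ext x
      rw [hocc x, ← hc]
      simp
    by_cases hs : (SignType.cast (A ({0, 1} : Set (ZMod n))) : ZMod n) = 1
    · have he3 : e = true := by rw [he2, if_pos hs]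
      have hv : view C (C i) true = ({0, -1} : Set (ZMod n)) := by
        have := view_eq C (C i) (-1) hoccset true
        rwa [show ((sgn true : ZMod n) * (-1) = -1) by simp [sgn]] at this
      rw [he3, hv] at hstep
      apply hA
      refine ⟨hs, ?_⟩
      have : C i + sgn true * (SignType.cast (A ({0, -1} : Set (ZMod n))) : ZMod n)
          = C i + (-1) := by rw [hstep, hc]
      simp only [sgn, if_pos] at this
      linear_combination this
    · have he3 : e = false := by rw [he2, if_neg hs]
      have hv : view C (C i) false = ({0, 1} : Set (ZMod n)) := by
        have := view_eq C (C i) (-1) hoccset false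
        rwa [show ((sgn false : ZMod n) * (-1) = 1) by simp [sgn]] at this
      rw [he3, hv] at hstep
      apply hs
      have : C i + sgn false * (SignType.cast (A ({0, 1} : Set (ZMod n))) : ZMod n)
          = C i + (-1) := by rw [hstep, hc]
      simp only [sgn, if_neg Bool.false_ne_true] at this
      linear_combination -this

end Aux

/-- for every `n ≥ 3`, every `k ≥ 3` and every deterministic
algorithm `A`, there are an initial configuration of `k` robots on the `n`-ring
and a fair sequential (SEQ) scheduler, together with adversarial direction
choices, such that the resulting execution of `A` never solves Gathering. -/
theorem stmt1 (n k : ℕ) (hn : 3 ≤ n) (hk : 3 ≤ k) (A : Algo n) :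
    ∃ (C₀ : Config n k) (sched : ℕ → Fin k) (env : ℕ → Bool),
      Fair sched ∧ ¬ Solves (exec A C₀ sched env) := by
  by_cases hA : (SignType.cast (A ({0, 1} : Set (ZMod n))) : ZMod n) = 1 ∧
      (SignType.cast (A ({0, -1} : Set (ZMod n))) : ZMod n) = -1
  · -- Case A: on an adjacent occupied pair the algorithm always crosses.
    refine ⟨cfgA n k 0, fun t => ⟨sA k t, sA_lt hk t⟩, fun _ => true, fairA hk, ?_⟩
    have hexec : ∀ t,
        exec A (cfgA n k 0) (fun t => ⟨sA k t, sA_lt hk t⟩) (fun _ => true) t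
          = cfgA n k t := by
      intro t
      induction t with
      | zero => rfl
      | succ t ih =>
        rw [exec, ih,
          step_pair A hA.1 hA.2 _ (occ_cfgA hk t) _ (cfgA_val t _) true]
        funext i
        rw [Function.update_apply, cfgA_succ hk t i]
        by_cases hi : i = (⟨sA k t, sA_lt hk t⟩ : Fin k)
        · rw [if_pos hi, if_pos (by rw [hi]), hi]
        · rw [if_neg hi, if_neg (fun h => hi (Fin.ext h))]
    rintro ⟨T, hT⟩
    have hall := (hT T le_rfl).1
    rw [hexec T] at hall
    obtain ⟨i0, h0⟩ := cfgA_zero (n := n) hk T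
    obtain ⟨i1, h1⟩ := cfgA_one (n := n) hk T
    exact one_ne_zero' hn (by rw [← h1, ← h0]; exact hall i1 i0)
  · -- Case B: the adversary can always avoid the final merge, so from a
    -- non-gathered initial configuration the robots never gather.
    refine ⟨fun i => if (i : ℕ) = 0 then 1 else 0,
      fun t => ⟨t % k, Nat.mod_lt _ (by omega)⟩,
      fun s => gB A (DB A (fun i => if (i : ℕ) = 0 then 1 else 0)
        (fun t => ⟨t % k, Nat.mod_lt _ (by omega)⟩) (gB A) s)
        ((⟨s % k, Nat.mod_lt _ (by omega)⟩ : Fin k)),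
      fairRR hk, ?_⟩
    rintro ⟨T, hT⟩
    have hall := (hT T le_rfl).1
    rw [exec_DB A _ _ (gB A) T] at hall
    have hnc : ∀ t, ¬ ∀ a b : Fin k,
        DB A (fun i => if (i : ℕ) = 0 then 1 else 0)
          (fun t => ⟨t % k, Nat.mod_lt _ (by omega)⟩) (gB A) t a
        = DB A (fun i => if (i : ℕ) = 0 then 1 else 0)
          (fun t => ⟨t % k, Nat.mod_lt _ (by omega)⟩) (gB A) t b := by
      intro t
      induction t with
      | zero =>
        intro h
        have h01 := h ⟨0, by omega⟩ ⟨1, by omega⟩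
        simp only [DB] at h01
        norm_num at h01
        exact one_ne_zero' hn h01
      | succ t ih =>
        exact B_preserve hn hk A hA _ ih _
    exact hnc T hall


end RobotRing
end

section
/- For every n ≥ 3, every k ≥ 3, every deterministic algorithm A, and every configuration C of k robots on the n-ring in which exactly two adjacent vertices are occupied, there exists a Round Robin scheduler (an activation order on the k robots repeated forever, together with adversarial direction choices) such that the execution of A from C never solves Gathering. -/
/-!
Robots on an anonymous `n`-ring (the cycle on `ZMod n`).  A configuration of `k`
robots is a function `Fin k → ZMod n` (several robots may share a vertex: a
multiplicity).  Robots are anonymous, oblivious and disoriented: an algorithm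
only sees the set of occupied vertices expressed as offsets in the robot's own
local frame, whose orientation (reflection) is chosen by the adversary at each
activation.  A sequential scheduler activates one robot per round.
-/

namespace RobotRing

/-!
Let `u, u + 1` be the two occupied vertices. A robot that sees exactly one other occupied
vertex, at distance one, has view `{0, 1}` or `{0, -1}`, and the adversary decides which.
A step can only gather a non-gathered configuration by moving a robot onto the unique
other occupied vertex, so if `A` neither moves forward on `{0, 1}` nor backward on
`{0, -1}`, no scheduler ever gathers. Otherwise the adversary can make every activated
robot jump to the other of the two vertices. As `k ≥ 3`, two robots start on the same
vertex; activate one of them first and the other last in each epoch. At the end of an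
epoch all robots have jumped equally often, so both vertices stay occupied, and inside an
epoch the first robot has jumped once more than the last one, so they stand apart.
-/

open Function

lemma _root_.Bool.surjective_of_ne {α : Type*} {g : α → Bool} {a b : α} (h : g a ≠ g b) :
    Surjective g := by
  intro c
  by_cases hc : g a = c
  · exact ⟨a, hc⟩
  · exact ⟨b, by cases c <;> simp_all⟩

lemma _root_.Equiv.Perm.exists_apply_eq_apply_eq {α : Type*} [DecidableEq α] {a b c d : α}
    (hab : a ≠ b) (hcd : c ≠ d) : ∃ σ : Equiv.Perm α, σ a = c ∧ σ b = d := by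
  set τ := Equiv.swap a c
  have hτb : τ b ≠ c := by
    rw [← Equiv.swap_apply_left a c]
    exact τ.injective.ne hab.symm
  refine ⟨τ.trans (Equiv.swap (τ b) d), ?_, ?_⟩
  · rw [Equiv.trans_apply, Equiv.swap_apply_left, Equiv.swap_apply_of_ne_of_ne hτb.symm hcd]
  · rw [Equiv.trans_apply, Equiv.swap_apply_left]

section

variable {n k : ℕ}

def IsGathered (C : Config n k) : Prop := ∀ i j, C i = C j

lemma not_solves_of_forall_not_isGathered {E : ℕ → Config n k} (h : ∀ t, ¬ IsGathered (E t)) :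
    ¬ Solves E :=
  fun ⟨T, hT⟩ => h T (hT T le_rfl).1

lemma sgn_mul_sgn (e : Bool) : (sgn e : ZMod n) * sgn e = 1 := by
  cases e <;> simp [sgn]

lemma view_of_occ_eq_pair {C : Config n k} {p w : ZMod n} (h : occ C = {p, w}) (e : Bool) :
    view C p e = {0, sgn e * (w - p)} := by
  have hsolve : ∀ d x : ZMod n, p + sgn e * d = x ↔ d = sgn e * (x - p) := fun d x => by
    constructor
    · rintro rfl
      linear_combination (-d) * sgn_mul_sgn e
    · rintro rfl
      linear_combination (x - p) * sgn_mul_sgn e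
  ext d
  simp only [view, h, Set.mem_insert_iff, Set.mem_singleton_iff, Set.mem_ofPred_eq, hsolve,
    sub_self, mul_zero]

lemma step_eq_update_of_occ_eq_pair {A : Algo n} {C : Config n k} {i : Fin k} {w : ZMod n}
    (h : occ C = {C i, w}) (e : Bool) :
    step A C i e = update C i (C i + sgn e * (A {0, sgn e * (w - C i)} : ZMod n)) := by
  rw [step, view_of_occ_eq_pair h]

lemma step_not_isGathered {A : Algo n} (h₁ : A {0, 1} ≠ .pos) (h₂ : A {0, -1} ≠ .neg)
    {C : Config n k} (hC : ¬ IsGathered C) (i : Fin k) (e : Bool) :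
    ¬ IsGathered (step A C i e) := by
  intro hg
  obtain ⟨v, hv⟩ : ∃ v, step A C i e i = v := ⟨_, rfl⟩
  have hothers : ∀ j ≠ i, C j = v := fun j hj => by
    rw [← hv, ← hg j i]
    exact (update_of_ne hj _ _).symm
  have hi : C i ≠ v := fun hi => hC fun a b => by
    have hall : ∀ j, C j = v := fun j => (eq_or_ne j i).elim (· ▸ hi) (hothers j)
    rw [hall a, hall b]
  obtain ⟨j, hj⟩ : ∃ j, j ≠ i := by
    by_contra! hall
    exact hC fun a b => by rw [hall a, hall b]
  have hocc : occ C = {C i, v} := by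
    ext x
    constructor
    · rintro ⟨j, rfl⟩
      exact (eq_or_ne j i).elim (fun h => .inl (h ▸ rfl)) (fun h => .inr (hothers j h))
    · rintro (rfl | rfl)
      exacts [⟨i, rfl⟩, ⟨j, hothers j hj⟩]
  -- the moving robot sees only `v`, at offset `d`, and the algorithm moves it by exactly `d`
  rw [step_eq_update_of_occ_eq_pair hocc, update_self] at hv
  set d := sgn e * (v - C i)
  have hd : (A {0, d} : ZMod n) = d := by
    linear_combination sgn e * hv - (A {0, d} : ZMod n) * sgn_mul_sgn e
  rcases hs : A {0, d} with _ | _ | _ <;> rw [hs] at hd hv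
  · exact hi (by simpa using hv)
  · exact h₂ (by rw [← SignType.coe_neg_one, ← SignType.neg_eq_neg_one, hd, ← hs])
  · exact h₁ (by rw [← SignType.coe_one, ← SignType.pos_eq_one, hd, ← hs])

lemma exec_not_isGathered {A : Algo n} (h₁ : A {0, 1} ≠ .pos) (h₂ : A {0, -1} ≠ .neg)
    {C : Config n k} (hC : ¬ IsGathered C) (sched : ℕ → Fin k) (env : ℕ → Bool) :
    ∀ t, ¬ IsGathered (exec A C sched env t)
  | 0 => hC
  | t + 1 => step_not_isGathered h₁ h₂ (exec_not_isGathered h₁ h₂ hC sched env t) _ _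

lemma exists_sgn_mul_eq {A : Algo n} (h : A {0, 1} = .pos ∨ A {0, -1} = .neg) {d : ZMod n}
    (hd : d = 1 ∨ d = -1) : ∃ e : Bool, sgn e * (A {0, sgn e * d} : ZMod n) = d := by
  rcases h with h | h <;> rcases hd with rfl | rfl
  exacts [⟨true, by simp [sgn, h]⟩, ⟨false, by simp [sgn, h]⟩, ⟨false, by simp [sgn, h]⟩,
    ⟨true, by simp [sgn, h]⟩]

def adjVertex (u : ZMod n) (b : Bool) : ZMod n := cond b (u + 1) u

lemma adjVertex_injective (h : (1 : ZMod n) ≠ 0) (u : ZMod n) : Injective (adjVertex u) := by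
  intro a b hab
  cases a <;> cases b <;> simp_all [adjVertex]

lemma occ_adjVertex_comp {u : ZMod n} {s : Fin k → Bool} (hs : Surjective s) (b : Bool) :
    occ (adjVertex u ∘ s) = {adjVertex u b, adjVertex u !b} := by
  rw [occ, hs.range_comp]
  ext x
  cases b <;> simp [adjVertex, eq_comm, or_comm]

lemma not_isGathered_adjVertex_comp (h : (1 : ZMod n) ≠ 0) {u : ZMod n} {s : Fin k → Bool}
    (hs : Surjective s) : ¬ IsGathered (adjVertex u ∘ s) := by
  intro hg
  obtain ⟨a, ha⟩ := hs true
  obtain ⟨b, hb⟩ := hs false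
  have := adjVertex_injective h u (hg a b)
  simp_all

lemma exists_surjective_adjVertex_comp_eq (h : (1 : ZMod n) ≠ 0) {u : ZMod n} {C : Config n k}
    (hC : occ C = {u, u + 1}) : ∃ s : Fin k → Bool, Surjective s ∧ adjVertex u ∘ s = C := by
  have hu : u ≠ u + 1 := fun hu => h (by linear_combination -hu)
  have hmem : ∀ x, x ∈ occ C ↔ x = u ∨ x = u + 1 := by simp [hC]
  refine ⟨fun i => decide (C i = u + 1), fun b => ?_, funext fun i => ?_⟩
  · obtain ⟨i, hi⟩ := (hmem (adjVertex u b)).2 (by cases b <;> simp [adjVertex])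
    refine ⟨i, ?_⟩
    cases b <;> simp_all [adjVertex]
  · rcases (hmem (C i)).1 ⟨i, rfl⟩ with hi | hi <;> simp [adjVertex, hi, hu]

lemma exists_orientation_step_eq_swap {A : Algo n} (h : A {0, 1} = .pos ∨ A {0, -1} = .neg)
    (u : ZMod n) : ∃ ε : Bool → Bool, ∀ (s : Fin k → Bool), Surjective s → ∀ i,
      step A (adjVertex u ∘ s) i (ε (s i)) = adjVertex u ∘ update s i (!s i) := by
  have hd : ∀ b, adjVertex u (!b) - adjVertex u b = 1 ∨ adjVertex u (!b) - adjVertex u b = -1 :=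
    fun b => by cases b <;> simp [adjVertex]
  choose ε hε using fun b => exists_sgn_mul_eq h (hd b)
  refine ⟨ε, fun s hs i => ?_⟩
  rw [step_eq_update_of_occ_eq_pair (occ_adjVertex_comp hs (s i)), comp_update]
  simp only [comp_apply, hε, add_sub_cancel]

-- The side (`true` for `u + 1`) of robot `i` at time `t` when it starts on side `f i` and
-- switches sides at each of its activations.
def flippedSide (f : Fin k → Bool) (sched : ℕ → Fin k) (t : ℕ) (i : Fin k) : Bool :=
  xor (f i) (Nat.count (fun t' => sched t' = i) t).bodd

lemma flippedSide_zero (f : Fin k → Bool) (sched : ℕ → Fin k) : flippedSide f sched 0 = f := by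
  funext i
  simp [flippedSide]

lemma flippedSide_succ (f : Fin k → Bool) (sched : ℕ → Fin k) (t : ℕ) :
    flippedSide f sched (t + 1) =
      update (flippedSide f sched t) (sched t) (!flippedSide f sched t (sched t)) := by
  funext i
  rcases eq_or_ne i (sched t) with rfl | hi
  · simp [flippedSide, Nat.count_succ]
  · simp [flippedSide, Nat.count_succ, hi, Ne.symm hi]

lemma exec_adjVertex_comp {A : Algo n} {u : ZMod n} {ε : Bool → Bool}
    (hε : ∀ (s : Fin k → Bool), Surjective s → ∀ i,
      step A (adjVertex u ∘ s) i (ε (s i)) = adjVertex u ∘ update s i (!s i))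
    {f : Fin k → Bool} {sched : ℕ → Fin k} (hsurj : ∀ t, Surjective (flippedSide f sched t)) :
    ∀ t, exec A (adjVertex u ∘ f) sched (fun t => ε (flippedSide f sched t (sched t))) t =
      adjVertex u ∘ flippedSide f sched t
  | 0 => by rw [flippedSide_zero]; rfl
  | t + 1 => by rw [exec, exec_adjVertex_comp hε hsurj t, hε _ (hsurj t), flippedSide_succ]

end

section RoundRobin

variable {k : ℕ} [NeZero k]

def roundRobin (π : Equiv.Perm (Fin k)) (t : ℕ) : Fin k := π (Fin.ofNat k t)

lemma isRoundRobin_roundRobin (π : Equiv.Perm (Fin k)) : IsRoundRobin (roundRobin π) :=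
  ⟨π, fun _ _ => rfl⟩

lemma count_roundRobin_eq (π : Equiv.Perm (Fin k)) (i : Fin k) (t : ℕ) :
    Nat.count (fun t' => roundRobin π t' = i) t =
      t / k + if (π.symm i : ℕ) < t % k then 1 else 0 := by
  have hiff : ∀ t', roundRobin π t' = i ↔ t' ≡ π.symm i [MOD k] := fun t' => by
    rw [roundRobin, ← Equiv.eq_symm_apply, Fin.ext_iff, Fin.val_ofNat, Nat.ModEq,
      Nat.mod_eq_of_lt (π.symm i).isLt]
  convert Nat.count_modEq_card t (NeZero.pos k) (π.symm i) using 3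
  · exact hiff _
  · rw [Nat.mod_eq_of_lt (π.symm i).isLt]

lemma surjective_flippedSide_roundRobin {f : Fin k → Bool} (hf : Surjective f)
    {π : Equiv.Perm (Fin k)} {i₁ i₂ : Fin k} (h₁ : (π.symm i₁ : ℕ) = 0)
    (h₂ : (π.symm i₂ : ℕ) = k - 1) (hf₁₂ : f i₁ = f i₂) (t : ℕ) :
    Surjective (flippedSide f (roundRobin π) t) := by
  have hside : flippedSide f (roundRobin π) t =
      fun i => xor (f i) (t / k + if (π.symm i : ℕ) < t % k then 1 else 0).bodd :=
    funext fun i => by rw [flippedSide, count_roundRobin_eq]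
  rw [hside]
  -- at an epoch boundary all robots have been activated `t / k` times; inside an epoch,
  -- `i₁` has been activated once more than `i₂`
  by_cases ht : t % k = 0
  · simp only [ht, Nat.not_lt_zero, if_false, add_zero]
    obtain ⟨a, ha⟩ := hf true
    obtain ⟨b, hb⟩ := hf false
    exact Bool.surjective_of_ne (a := a) (b := b) (by simp [ha, hb])
  · apply Bool.surjective_of_ne (a := i₁) (b := i₂)
    have : ¬ k - 1 < t % k := by have := Nat.mod_lt t (NeZero.pos k); omega
    simp [h₁, h₂, hf₁₂, Nat.pos_of_ne_zero ht, this]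

end RoundRobin

/-- for every `n ≥ 3`, `k ≥ 3`, every deterministic algorithm `A`
and every configuration `C` of `k` robots on the `n`-ring in which exactly two
adjacent vertices are occupied, there is a Round Robin scheduler (together with
adversarial direction choices) such that the execution of `A` from `C` never
solves Gathering. -/
theorem stmt2 (n k : ℕ) (hn : 3 ≤ n) (hk : 3 ≤ k) (A : Algo n)
    (C : Config n k) (hC : ∃ u : ZMod n, occ C = {u, u + 1}) :
    ∃ (sched : ℕ → Fin k) (env : ℕ → Bool),
      IsRoundRobin sched ∧ ¬ Solves (exec A C sched env) := by
  have : Fact (1 < n) := ⟨by omega⟩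
  have : NeZero k := ⟨by omega⟩
  obtain ⟨u, hocc⟩ := hC
  obtain ⟨f, hf, rfl⟩ := exists_surjective_adjVertex_comp_eq one_ne_zero hocc
  by_cases hswap : A {0, 1} = .pos ∨ A {0, -1} = .neg
  · obtain ⟨i₁, i₂, hne, hf₁₂⟩ := Fintype.exists_ne_map_eq_of_card_lt f (by simp; omega)
    obtain ⟨π, hπ₁, hπ₂⟩ := Equiv.Perm.exists_apply_eq_apply_eq
      (a := ⟨0, by omega⟩) (b := ⟨k - 1, by omega⟩) (by simp [Fin.ext_iff]; omega) hne
    have hsurj := surjective_flippedSide_roundRobin hf (π := π) (by simp [← hπ₁])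
      (by simp [← hπ₂]) hf₁₂
    obtain ⟨ε, hε⟩ := exists_orientation_step_eq_swap (k := k) hswap u
    refine ⟨roundRobin π, fun t => ε (flippedSide f (roundRobin π) t (roundRobin π t)),
      isRoundRobin_roundRobin π, not_solves_of_forall_not_isGathered fun t => ?_⟩
    rw [exec_adjVertex_comp hε hsurj]
    exact not_isGathered_adjVertex_comp one_ne_zero (hsurj t)
  · rw [not_or] at hswap
    exact ⟨roundRobin 1, fun _ => true, isRoundRobin_roundRobin 1,
      not_solves_of_forall_not_isGathered <|
        exec_not_isGathered hswap.1 hswap.2 (not_isGathered_adjVertex_comp one_ne_zero hf) _ _⟩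

end RobotRing
end

section
/- For every n ≥ 3, every k ≥ n+1, every deterministic algorithm A, and every configuration C of k robots on the n-ring in which all n vertices are occupied, there exists a Round Robin scheduler (an activation order on the k robots repeated forever, together with adversarial direction choices) such that the execution of A from C never solves Gathering. -/
/-!
Robots on an anonymous `n`-ring (the cycle on `ZMod n`).  A configuration of `k`
robots is a function `Fin k → ZMod n` (several robots may share a vertex: a
multiplicity).  Robots are anonymous, oblivious and disoriented: an algorithm
only sees the set of occupied vertices expressed as offsets in the robot's own
local frame, whose orientation (reflection) is chosen by the adversary at each
activation.  A sequential scheduler activates one robot per round.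
-/

namespace RobotRing

/-- Auxiliary: the intended execution in the moving case: after `t` rounds,
robot `i` has been activated `t / k + (1 if its round-robin position is < t % k)`
times, and each activation moved it by `+1`. -/
def Dfun {n k : ℕ} (C : Config n k) (π : Equiv.Perm (Fin k)) (t : ℕ) : Config n k :=
  fun i => C i + ((t / k + if (π.symm i).val < t % k then 1 else 0 : ℕ) : ZMod n)

lemma succ_divmod {k : ℕ} (hk : 0 < k) (t : ℕ) :
    ((t + 1) % k = if t % k + 1 = k then 0 else t % k + 1) ∧
    ((t + 1) / k = if t % k + 1 = k then t / k + 1 else t / k) := by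
  have h := Nat.div_add_mod t k
  set q := t / k with hq
  set r := t % k with hr0
  by_cases hc : r + 1 = k
  · simp only [if_pos hc]
    have H : (t + 1) / k = q + 1 ∧ (t + 1) % k = 0 :=
      (Nat.div_mod_unique hk).mpr ⟨by rw [← h, ← hc]; ring, hk⟩
    exact ⟨H.2, H.1⟩
  · simp only [if_neg hc]
    have hrk : r < k := Nat.mod_lt _ hk
    have H : (t + 1) / k = q ∧ (t + 1) % k = r + 1 :=
      (Nat.div_mod_unique hk).mpr ⟨by rw [← h]; ring, by omega⟩
    exact ⟨H.2, H.1⟩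

lemma view_univ {n k : ℕ} (C : Config n k) (hC : occ C = Set.univ) (p : ZMod n) (e : Bool) :
    view C p e = Set.univ := by
  apply Set.eq_univ_iff_forall.mpr
  intro d
  show _ + _ * d ∈ occ C
  rw [hC]
  trivial

lemma step_univ {n k : ℕ} (A : Algo n) (D : Config n k) (hD : occ D = Set.univ)
    (i : Fin k) (e : Bool) :
    step A D i e = Function.update D i (D i + sgn e * (SignType.cast (A Set.univ) : ZMod n)) := by
  unfold step
  rw [view_univ _ hD]

/-- for every `n ≥ 3`, `k ≥ n + 1`, every deterministic algorithm
`A` and every configuration `C` of `k` robots on the `n`-ring in which all `n`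
vertices are occupied, there is a Round Robin scheduler (together with
adversarial direction choices) such that the execution of `A` from `C` never
solves Gathering. -/
theorem stmt4 (n k : ℕ) (hn : 3 ≤ n) (hk : n + 1 ≤ k) (A : Algo n)
    (C : Config n k) (hC : occ C = Set.univ) :
    ∃ (sched : ℕ → Fin k) (env : ℕ → Bool),
      IsRoundRobin sched ∧ ¬ Solves (exec A C sched env) := by
  classical
  haveI : NeZero n := ⟨by omega⟩
  haveI : Fact (1 < n) := ⟨by omega⟩
  have hk0 : 0 < k := by omega
  have hCsurj : Function.Surjective C := Set.range_eq_univ.mp hC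
  by_cases hm0 : A Set.univ = 0
  · -- static case: the algorithm prescribes `nil` on the full view, nothing ever moves
    refine ⟨fun t => ⟨t % k, Nat.mod_lt _ hk0⟩, fun _ => true, ⟨Equiv.refl _, fun t h => rfl⟩, ?_⟩
    have hfix : ∀ t, exec A C (fun t => (⟨t % k, Nat.mod_lt _ hk0⟩ : Fin k)) (fun _ => true) t = C := by
      intro t
      induction t with
      | zero => rfl
      | succ t ih =>
        have e1 : exec A C (fun t => (⟨t % k, Nat.mod_lt _ hk0⟩ : Fin k)) (fun _ => true) (t + 1)
            = step A (exec A C (fun t => (⟨t % k, Nat.mod_lt _ hk0⟩ : Fin k)) (fun _ => true) t)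
              (⟨t % k, Nat.mod_lt t hk0⟩ : Fin k) true := rfl
        rw [e1, ih, step_univ A C hC, hm0]
        have hc0 : (SignType.cast (0 : SignType) : ZMod n) = 0 := rfl
        rw [hc0, mul_zero, add_zero, Function.update_eq_self]
    rintro ⟨T, hT⟩
    obtain ⟨i0, hi0⟩ := hCsurj 0
    obtain ⟨j1, hj1⟩ := hCsurj 1
    have h01 := (hT T le_rfl).1 i0 j1
    rw [hfix T, hi0, hj1] at h01
    exact zero_ne_one h01
  · -- moving case
    obtain ⟨i₁, i₂, hne12, hEq⟩ : ∃ i₁ i₂ : Fin k, i₁ ≠ i₂ ∧ C i₁ = C i₂ := by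
      apply Fintype.exists_ne_map_eq_of_card_lt
      rw [ZMod.card, Fintype.card_fin]
      omega
    set a := Function.surjInv hCsurj with ha_def
    have ha : ∀ v, C (a v) = v := fun v => Function.surjInv_eq hCsurj v
    have hcastval : ∀ x : ZMod n, ((x.val : ℕ) : ZMod n) = x := fun x => ZMod.natCast_rightInverse x
    set v₀ := C i₁ with hv₀
    set xtr := if a v₀ = i₁ then i₂ else i₁ with hxtr_def
    have hxtrC : C xtr = v₀ := by
      rw [hxtr_def]
      split_ifs
      · exact hEq.symm
      · rfl
    have hxtra : xtr ≠ a v₀ := by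
      rw [hxtr_def]
      split_ifs with h
      · intro hh
        exact hne12 (h ▸ hh ▸ rfl)
      · exact fun hh => h hh.symm
    set σ : Fin n → Fin k := fun j => a (v₀ + 1 + ((j : ℕ) : ZMod n)) with hσ_def
    have hσC : ∀ j, C (σ j) = v₀ + 1 + ((j : ℕ) : ZMod n) := fun j => ha _
    have hσ : Function.Injective σ := by
      intro j₁ j₂ h
      have h1 : (v₀ + 1 + ((j₁ : ℕ) : ZMod n)) = v₀ + 1 + ((j₂ : ℕ) : ZMod n) := by
        rw [← hσC j₁, ← hσC j₂, h]
      have h2 : (((j₁ : ℕ)) : ZMod n) = ((j₂ : ℕ) : ZMod n) := add_left_cancel h1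
      have h3 := congrArg ZMod.val h2
      rw [ZMod.val_cast_of_lt j₁.isLt, ZMod.val_cast_of_lt j₂.isLt] at h3
      exact Fin.ext h3
    have hcard : Fintype.card ↥((Set.range σ)ᶜ) = k - n := by
      rw [Fintype.card_compl_set, Set.card_range_of_injective hσ, Fintype.card_fin,
        Fintype.card_fin]
    obtain ⟨π, hπ⟩ : ∃ π : Equiv.Perm (Fin k),
        ∀ (p : Fin k) (_ : k - n ≤ p.val),
          π p = σ ⟨p.val - (k - n), by have := p.isLt; omega⟩ := by
      set E1 : Fin n ⊕ Fin (k - n) ≃ Fin k :=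
        (Equiv.sumComm _ _).trans (finSumFinEquiv.trans (finCongr (by omega))) with hE1
      set E2 : Fin n ⊕ Fin (k - n) ≃ Fin k :=
        (Equiv.sumCongr (Equiv.ofInjective σ hσ) (Fintype.equivFinOfCardEq hcard).symm).trans
          (Equiv.Set.sumCompl (Set.range σ)) with hE2
      refine ⟨E1.symm.trans E2, ?_⟩
      intro p hp
      have hp' : E1 (Sum.inl ⟨p.val - (k - n), by have := p.isLt; omega⟩) = p := by
        apply Fin.ext
        rw [hE1]
        simp only [Equiv.trans_apply, Equiv.sumComm_apply, Sum.swap_inl,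
          finSumFinEquiv_apply_right, finCongr_apply, Fin.coe_cast, Fin.coe_natAdd]
        have := p.isLt
        omega
      have hp'' := congrArg E1.symm hp'
      rw [Equiv.symm_apply_apply] at hp''
      rw [Equiv.trans_apply, ← hp'', hE2]
      simp only [Equiv.trans_apply, Equiv.sumCongr_apply, Sum.map_inl,
        Equiv.Set.sumCompl_apply_inl, Equiv.ofInjective_apply]
    have hπval : ∀ j : Fin n, (π.symm (σ j)).val = k - n + j.val := by
      intro j
      have h1 : π ⟨k - n + j.val, by have := j.isLt; omega⟩ = σ j := by
        rw [hπ ⟨k - n + j.val, by have := j.isLt; omega⟩ (Nat.le_add_right _ _)]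
        congr 1
        apply Fin.ext
        show k - n + j.val - (k - n) = j.val
        omega
      rw [← h1, Equiv.symm_apply_apply]
    have hπlt : ∀ i : Fin k, i ∉ Set.range σ → (π.symm i).val < k - n := by
      intro i hi
      by_contra hcon
      push_neg at hcon
      have h2 := hπ (π.symm i) hcon
      rw [Equiv.apply_symm_apply] at h2
      exact hi ⟨_, h2.symm⟩
    have haσ : ∀ u : ZMod n, a u = σ ⟨(u - (v₀ + 1)).val, ZMod.val_lt _⟩ := by
      intro u
      rw [hσ_def]
      show a u = a (v₀ + 1 + (((u - (v₀ + 1)).val : ℕ) : ZMod n))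
      congr 1
      rw [hcastval]
      ring
    have hpos_a : ∀ u : ZMod n, (π.symm (a u)).val = k - n + (u - (v₀ + 1)).val := by
      intro u
      rw [haσ u, hπval]
    have hxtr_notin : xtr ∉ Set.range σ := by
      rintro ⟨j, hj⟩
      apply hxtra
      have hy : v₀ + 1 + ((j : ℕ) : ZMod n) = v₀ := by rw [← hσC j, hj, hxtrC]
      rw [← hj, hσ_def]
      show a (v₀ + 1 + ((j : ℕ) : ZMod n)) = a v₀
      rw [hy]
    have hxtrpos : (π.symm xtr).val < k - n := hπlt xtr hxtr_notin
    obtain ⟨ee, hmove⟩ : ∃ e : Bool,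
        sgn e * (SignType.cast (A Set.univ) : ZMod n) = 1 := by
      rcases hA : A Set.univ with _ | _ | _
      · exact absurd hA hm0
      · exact ⟨false, by show (-1 : ZMod n) * (-1) = 1; ring⟩
      · exact ⟨true, by show (1 : ZMod n) * 1 = 1; ring⟩
    refine ⟨fun t => π ⟨t % k, Nat.mod_lt _ hk0⟩, fun _ => ee, ⟨π, fun t h => rfl⟩, ?_⟩
    -- all vertices remain occupied forever
    have hDocc : ∀ t (w : ZMod n), ∃ i, Dfun C π t i = w := by
      intro t w
      have hr : t % k < k := Nat.mod_lt _ hk0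
      by_cases h1 : t % k ≤ k - n
      · refine ⟨a (w - (t / k : ℕ)), ?_⟩
        have hcnd : ¬ ((π.symm (a (w - (t / k : ℕ)))).val < t % k) := by
          rw [hpos_a]
          omega
        simp only [Dfun]
        rw [if_neg hcnd, ha]
        push_cast
        ring
      · push_neg at h1
        by_cases h2 : (w - (t / k : ℕ) - (v₀ + 1)).val = 0
        · refine ⟨xtr, ?_⟩
          have hu1 : w - (t / k : ℕ) = v₀ + 1 := by
            have h3 : w - (t / k : ℕ) - (v₀ + 1) = 0 := (ZMod.val_eq_zero _).mp h2
            linear_combination h3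
          have hcnd : (π.symm xtr).val < t % k := by omega
          simp only [Dfun]
          rw [if_pos hcnd, hxtrC]
          push_cast
          linear_combination -hu1
        · by_cases h3 : t % k ≤ k - n + (w - (t / k : ℕ) - (v₀ + 1)).val
          · refine ⟨a (w - (t / k : ℕ)), ?_⟩
            have hcnd : ¬ ((π.symm (a (w - (t / k : ℕ)))).val < t % k) := by
              rw [hpos_a]
              omega
            simp only [Dfun]
            rw [if_neg hcnd, ha]
            push_cast
            ring
          · push_neg at h3
            have hjv1 : 1 ≤ (w - (t / k : ℕ) - (v₀ + 1)).val := Nat.one_le_iff_ne_zero.mpr h2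
            have hjvlt : (w - (t / k : ℕ) - (v₀ + 1)).val < n := ZMod.val_lt _
            refine ⟨a (w - (t / k : ℕ) - 1), ?_⟩
            have hval : (w - (t / k : ℕ) - 1 - (v₀ + 1)).val
                = (w - (t / k : ℕ) - (v₀ + 1)).val - 1 := by
              have h4 : w - (t / k : ℕ) - 1 - (v₀ + 1)
                  = (((w - (t / k : ℕ) - (v₀ + 1)).val - 1 : ℕ) : ZMod n) := by
                rw [Nat.cast_sub hjv1, hcastval]
                push_cast
                ring
              rw [h4, ZMod.val_cast_of_lt (by omega)]
            have hcnd : (π.symm (a (w - (t / k : ℕ) - 1))).val < t % k := by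
              rw [hpos_a, hval]
              omega
            simp only [Dfun]
            rw [if_pos hcnd, ha]
            push_cast
            ring
    -- the execution follows `Dfun`
    have hexec : ∀ t,
        exec A C (fun t => π ⟨t % k, Nat.mod_lt _ hk0⟩) (fun _ => ee) t = Dfun C π t := by
      intro t
      induction t with
      | zero =>
        funext i
        show C i = C i + ((0 / k + if (π.symm i).val < 0 % k then 1 else 0 : ℕ) : ZMod n)
        rw [Nat.zero_div, Nat.zero_mod, if_neg (Nat.not_lt_zero _)]
        push_cast
        ring
      | succ t ih =>
        have hocc : occ (Dfun C π t) = Set.univ := Set.range_eq_univ.mpr (fun w => hDocc t w)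
        have hrk : t % k < k := Nat.mod_lt _ hk0
        have e1 : exec A C (fun t => π ⟨t % k, Nat.mod_lt _ hk0⟩) (fun _ => ee) (t + 1)
            = step A (Dfun C π t) (π ⟨t % k, hrk⟩) ee := by
          rw [← ih]
          rfl
        rw [e1, step_univ A _ hocc, hmove]
        have hd := succ_divmod hk0 t
        have hsymm : (π.symm (π ⟨t % k, hrk⟩)).val = t % k := by
          rw [Equiv.symm_apply_apply]
        funext i
        by_cases hi : i = π ⟨t % k, hrk⟩
        · rw [hi, Function.update_self]
          simp only [Dfun]
          rw [hsymm, hd.1, hd.2]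
          split_ifs <;> first | (exfalso; omega) | (push_cast; ring1)
        · rw [Function.update_of_ne hi]
          have hvne : (π.symm i).val ≠ t % k := by
            intro hv
            apply hi
            have hfe : π.symm i = ⟨t % k, hrk⟩ := Fin.ext hv
            calc i = π (π.symm i) := (Equiv.apply_symm_apply π i).symm
            _ = π ⟨t % k, hrk⟩ := by rw [hfe]
          have hvlt : (π.symm i).val < k := (π.symm i).isLt
          simp only [Dfun]
          rw [hd.1, hd.2]
          split_ifs <;> first | (exfalso; omega) | (push_cast; ring1)
    rintro ⟨T, hT⟩
    obtain ⟨i0, hi0⟩ := hDocc T 0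
    obtain ⟨j1, hj1⟩ := hDocc T 1
    have h01 := (hT T le_rfl).1 i0 j1
    rw [hexec T, hi0, hj1] at h01
    exact zero_ne_one h01

end RobotRing
end

section
/- Let C be a configuration of k robots on an n-ring that is in task T4. Consider any execution under any Round Robin scheduler and adversarial choices in which every robot activated in a configuration in T4 executes move m4. Then the first configuration along the execution that is not in T4 occurs within at most n−5 epochs, and it is in task T5. -/
/-!
Robots on an anonymous `n`-ring (the cycle on `ZMod n`).  A configuration of `k`
robots is a function `Fin k → ZMod n` (several robots may share a vertex: a
multiplicity).  Robots are anonymous, oblivious and disoriented: an algorithm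
only sees the set of occupied vertices expressed as offsets in the robot's own
local frame, whose orientation (reflection) is chosen by the adversary at each
activation.  A sequential scheduler activates one robot per round.
-/

namespace RobotRing

/-! ### Holes, islands, the boolean properties, the tasks `T1`–`T8`,
the unsolvable configurations `UC`, and the moves `m1`–`m7` of GatheRRing. -/

/-- The arc of `m` consecutive vertices of the ring starting at `a`. -/
def arc {n : ℕ} (a : ZMod n) (m : ℕ) : Set (ZMod n) :=
  {v | ∃ i : ℕ, i < m ∧ v = a + (i : ZMod n)}

/-- `H` is a hole of the occupied set `S`: a maximal nonempty set of consecutive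
empty vertices. -/
def IsHole {n : ℕ} (S H : Set (ZMod n)) : Prop :=
  ∃ (a : ZMod n) (m : ℕ), 0 < m ∧ H = arc a m ∧ (∀ v ∈ H, v ∉ S) ∧
    a - 1 ∈ S ∧ a + (m : ZMod n) ∈ S

/-- `I` is an island of the occupied set `S`: a maximal set of consecutive
occupied vertices. -/
def IsIsland {n : ℕ} (S I : Set (ZMod n)) : Prop :=
  ∃ (a : ZMod n) (m : ℕ), 0 < m ∧ I = arc a m ∧ (∀ v ∈ I, v ∈ S) ∧
    a - 1 ∉ S ∧ a + (m : ZMod n) ∉ S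

/-- `f`: there are no holes. -/
def propF {n : ℕ} (S : Set (ZMod n)) : Prop := ¬ ∃ H, IsHole S H

/-- `b4`: there is exactly one hole, of size at most `4`. -/
def propB4 {n : ℕ} (S : Set (ZMod n)) : Prop :=
  ∃ H, IsHole S H ∧ H.ncard ≤ 4 ∧ ∀ H', IsHole S H' → H' = H

/-- `b5`: there is exactly one hole, of size at least `5`. -/
def propB5 {n : ℕ} (S : Set (ZMod n)) : Prop :=
  ∃ H, IsHole S H ∧ 5 ≤ H.ncard ∧ ∀ H', IsHole S H' → H' = H

/-- `h`: there are exactly two holes, one of size `1`, the other of size greater than `1`. -/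
def propH {n : ℕ} (S : Set (ZMod n)) : Prop :=
  ∃ H₁ H₂, IsHole S H₁ ∧ IsHole S H₂ ∧ H₁ ≠ H₂ ∧ H₁.ncard = 1 ∧ 1 < H₂.ncard ∧
    ∀ H, IsHole S H → H = H₁ ∨ H = H₂

/-- `o1`: exactly one vertex is occupied. -/
def propO1 {n : ℕ} (S : Set (ZMod n)) : Prop := ∃ u : ZMod n, S = {u}

/-- `o2`: exactly two adjacent vertices are occupied. -/
def propO2 {n : ℕ} (S : Set (ZMod n)) : Prop := ∃ u : ZMod n, S = {u, u + 1}

/-- `o3`: exactly three consecutive vertices are occupied. -/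
def propO3 {n : ℕ} (S : Set (ZMod n)) : Prop := ∃ u : ZMod n, S = {u, u + 1, u + 2}

/-- `p`: exactly two vertices are occupied, separated by exactly one empty vertex. -/
def propP {n : ℕ} (S : Set (ZMod n)) : Prop := ∃ u : ZMod n, S = {u, u + 2} ∧ u + 1 ∉ S

/-- Task `T8` (`pre8 = o1`, no higher task). -/
def inT8 {n : ℕ} (S : Set (ZMod n)) : Prop := propO1 S

def inT7 {n : ℕ} (S : Set (ZMod n)) : Prop := propO2 S ∧ ¬ propO1 S

def inT6 {n : ℕ} (S : Set (ZMod n)) : Prop := propO3 S ∧ ¬ propO2 S ∧ ¬ propO1 S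

def inT5 {n : ℕ} (S : Set (ZMod n)) : Prop :=
  propP S ∧ ¬ propO3 S ∧ ¬ propO2 S ∧ ¬ propO1 S

def inT4 {n : ℕ} (S : Set (ZMod n)) : Prop :=
  propH S ∧ ¬ propP S ∧ ¬ propO3 S ∧ ¬ propO2 S ∧ ¬ propO1 S

def inT3 {n : ℕ} (S : Set (ZMod n)) : Prop :=
  propB5 S ∧ ¬ propH S ∧ ¬ propP S ∧ ¬ propO3 S ∧ ¬ propO2 S ∧ ¬ propO1 S

def inT2 {n : ℕ} (S : Set (ZMod n)) : Prop :=
  (propB4 S ∨ propF S) ∧ ¬ propB5 S ∧ ¬ propH S ∧ ¬ propP S ∧ ¬ propO3 S ∧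
    ¬ propO2 S ∧ ¬ propO1 S

def inT1 {n : ℕ} (S : Set (ZMod n)) : Prop :=
  ¬ (propB4 S ∨ propF S) ∧ ¬ propB5 S ∧ ¬ propH S ∧ ¬ propP S ∧ ¬ propO3 S ∧
    ¬ propO2 S ∧ ¬ propO1 S

/-- The unsolvable configurations (the set `UC`) for Gathering under Round Robin. -/
def UC {n k : ℕ} (C : Config n k) : Prop :=
  (3 ≤ k ∧ ∃ u : ZMod n, occ C = {u, u + 1}) ∨
  (3 ≤ k ∧ ∃ u : ZMod n, occ C = {u, u + 1, u + 2}) ∨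
  (n + 1 ≤ k ∧ occ C = Set.univ) ∨
  (n = 5 ∧ 5 ≤ k ∧ (occ C).ncard = 3 ∧
    ∃ v : ZMod n, (∃ i j : Fin k, i ≠ j ∧ C i = v ∧ C j = v) ∧
      (v + 1 ∈ occ C ∨ v - 1 ∈ occ C)) ∨
  (n = 5 ∧ 5 ≤ k ∧ (occ C).ncard = 4)

/-- `H` is a hole of maximum size (if several holes share the maximum size,
they are all "biggest holes"). -/
def IsMaxHole {n : ℕ} (S H : Set (ZMod n)) : Prop :=
  IsHole S H ∧ ∀ H', IsHole S H' → H'.ncard ≤ H.ncard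

/-- There is a unique hole of maximum size. -/
def UniqueMaxHole {n : ℕ} (S : Set (ZMod n)) : Prop :=
  ∀ H H', IsMaxHole S H → IsMaxHole S H' → H = H'

/-- All islands have size `2`. -/
def AllIslands2 {n : ℕ} (S : Set (ZMod n)) : Prop :=
  ∀ I, IsIsland S I → I.ncard = 2

/-- The distance from `v` to its closest empty vertex in direction `d`. -/
noncomputable def emptyDist {n : ℕ} (S : Set (ZMod n)) (v d : ZMod n) : ℕ :=
  sInf {m : ℕ | 0 < m ∧ v + (m : ZMod n) * d ∉ S}

/-- A direction on the ring: one of the two unit steps. -/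
def Dir {n : ℕ} (d : ZMod n) : Prop := d = 1 ∨ d = -1

/-- The vertex `v` is neighboring a hole of maximum size. -/
def AdjMaxHole {n : ℕ} (S : Set (ZMod n)) (v : ZMod n) : Prop :=
  ∃ H, IsMaxHole S H ∧ (v + 1 ∈ H ∨ v - 1 ∈ H)

/-- Exactly `n - 2` vertices are occupied and the occupied vertices are not all
consecutive. -/
def SpecialN2 {n : ℕ} (S : Set (ZMod n)) : Prop :=
  S.ncard = n - 2 ∧ ¬ ∃ a : ZMod n, S = arc a (n - 2)

/-- The vertex `v` is neighboring exactly one empty vertex. -/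
def OneEmptyNbr {n : ℕ} (S : Set (ZMod n)) (v : ZMod n) : Prop :=
  (v + 1 ∉ S ∧ v - 1 ∈ S) ∨ (v + 1 ∈ S ∧ v - 1 ∉ S)

/-- Move `m1`, as a relation: activating robot `i` in configuration `C` can
produce `C'` (all remaining ties are resolved by the adversary). -/
def M1 {n k : ℕ} (C : Config n k) (i : Fin k) (C' : Config n k) : Prop :=
  (¬ AdjMaxHole (occ C) (C i) ∧ C' = C) ∨
  (AdjMaxHole (occ C) (C i) ∧
    ((AllIslands2 (occ C) ∧ ¬ UniqueMaxHole (occ C) ∧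
        ∃ d : ZMod n, Dir d ∧
          emptyDist (occ C) (C i) d ≤ emptyDist (occ C) (C i) (-d) ∧
          C' = Function.update C i (C i + d)) ∨
     (AllIslands2 (occ C) ∧ UniqueMaxHole (occ C) ∧
        ∃ d : ZMod n, Dir d ∧ C i + d ∈ occ C ∧
          C' = Function.update C i (C i + d)) ∨
     (¬ AllIslands2 (occ C) ∧ SpecialN2 (occ C) ∧ OneEmptyNbr (occ C) (C i) ∧
        ∃ d : ZMod n, Dir d ∧ C i + d ∈ occ C ∧
          C' = Function.update C i (C i + d)) ∨
     (¬ AllIslands2 (occ C) ∧ SpecialN2 (occ C) ∧ ¬ OneEmptyNbr (occ C) (C i) ∧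
        C' = C) ∨
     (¬ AllIslands2 (occ C) ∧ ¬ SpecialN2 (occ C) ∧
        ∃ d : ZMod n, Dir d ∧ (∃ H, IsMaxHole (occ C) H ∧ C i - d ∈ H) ∧
          C' = Function.update C i (C i + d))))

/-- Move `m2`, as a relation. -/
def M2 {n k : ℕ} (C : Config n k) (i : Fin k) (C' : Config n k) : Prop :=
  (¬ (C i + 1 ∈ occ C ∧ C i - 1 ∈ occ C) ∧ C' = C) ∨
  ((C i + 1 ∈ occ C ∧ C i - 1 ∈ occ C) ∧
    ((∃ w : ZMod n, n = 6 ∧ IsHole (occ C) {w} ∧ (∀ H, IsHole (occ C) H → H = {w}) ∧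
        ((C i ≠ w + 3 ∧
            ∃ d : ZMod n, Dir d ∧ ringDist (C i) w < ringDist (C i + d) w ∧
              C' = Function.update C i (C i + d)) ∨
         (C i = w + 3 ∧ C' = C))) ∨
     (¬ (∃ w : ZMod n, n = 6 ∧ IsHole (occ C) {w} ∧ ∀ H, IsHole (occ C) H → H = {w}) ∧
        ∃ d : ZMod n, Dir d ∧
          emptyDist (occ C) (C i) d ≤ emptyDist (occ C) (C i) (-d) ∧
          C' = Function.update C i (C i + d))))

/-- Move `m3`, as a relation: move toward an empty neighbor, if any. -/
def M3 {n k : ℕ} (C : Config n k) (i : Fin k) (C' : Config n k) : Prop :=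
  (∃ d : ZMod n, Dir d ∧ C i + d ∉ occ C ∧ C' = Function.update C i (C i + d)) ∨
  ((∀ d : ZMod n, Dir d → C i + d ∈ occ C) ∧ C' = C)

/-- Move `m4`, as a relation. -/
def M4 {n k : ℕ} (C : Config n k) (i : Fin k) (C' : Config n k) : Prop :=
  (∃ d : ZMod n, Dir d ∧ (∃ H, IsMaxHole (occ C) H ∧ C i + d ∈ H) ∧ C i - d ∈ occ C ∧
     C' = Function.update C i (C i - d)) ∨
  ((¬ ∃ d : ZMod n, Dir d ∧ (∃ H, IsMaxHole (occ C) H ∧ C i + d ∈ H) ∧ C i - d ∈ occ C) ∧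
     C' = C)

/-- Move `m5`, as a relation: move onto the single empty vertex lying between the
two occupied vertices (a tie is resolved by the adversary). -/
def M5 {n k : ℕ} (C : Config n k) (i : Fin k) (C' : Config n k) : Prop :=
  ∃ d : ZMod n, Dir d ∧ C i + d ∉ occ C ∧ C i + d + d ∈ occ C ∧
    C' = Function.update C i (C i + d)

/-- Move `m6`, as a relation: a robot neighboring an empty vertex moves toward its
occupied neighbor. -/
def M6 {n k : ℕ} (C : Config n k) (i : Fin k) (C' : Config n k) : Prop :=
  (∃ d : ZMod n, Dir d ∧ C i + d ∉ occ C ∧ C i - d ∈ occ C ∧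
     C' = Function.update C i (C i - d)) ∨
  ((∀ d : ZMod n, Dir d → C i + d ∈ occ C) ∧ C' = C)

/-- Move `m7`, as a relation: move toward the occupied neighbor. -/
def M7 {n k : ℕ} (C : Config n k) (i : Fin k) (C' : Config n k) : Prop :=
  ∃ d : ZMod n, Dir d ∧ C i + d ∈ occ C ∧ C' = Function.update C i (C i + d)

/-- One step of Algorithm GatheRRing: the activated robot determines the task of
the perceived configuration and executes the corresponding move (`nil` in `T8`). -/
def GStep {n k : ℕ} (C : Config n k) (i : Fin k) (C' : Config n k) : Prop :=
  (inT1 (occ C) ∧ M1 C i C') ∨ (inT2 (occ C) ∧ M2 C i C') ∨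
  (inT3 (occ C) ∧ M3 C i C') ∨ (inT4 (occ C) ∧ M4 C i C') ∨
  (inT5 (occ C) ∧ M5 C i C') ∨ (inT6 (occ C) ∧ M6 C i C') ∨
  (inT7 (occ C) ∧ M7 C i C') ∨ (inT8 (occ C) ∧ C' = C)


/-! ### Auxiliary development for the proof of `stmt12`. -/

section Statics
set_option linter.unusedSectionVars false

variable {n : ℕ} [NeZero n]

lemma self_eq_add_val (w x : ZMod n) : x = w + ((x - w).val : ZMod n) := by
  rw [ZMod.natCast_val, ZMod.cast_id]; ring

lemma addw_inj {w : ZMod n} {s t : ℕ} (hs : s < n) (ht : t < n) :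
    w + (s : ZMod n) = w + (t : ZMod n) ↔ s = t := by
  constructor
  · intro h
    have h2 : (s : ZMod n) = t := add_left_cancel h
    have := congrArg ZMod.val h2
    rwa [ZMod.val_natCast_of_lt hs, ZMod.val_natCast_of_lt ht] at this
  · rintro rfl; rfl

lemma j_add (w : ZMod n) {t : ℕ} (ht : t < n) : ((w + (t : ZMod n)) - w).val = t := by
  rw [add_sub_cancel_left, ZMod.val_natCast_of_lt ht]

lemma mem_arc_off (w : ZMod n) {r m : ℕ} (hrm : r + m ≤ n) (x : ZMod n) :
    x ∈ arc (w + (r : ZMod n)) m ↔ r ≤ (x - w).val ∧ (x - w).val < r + m := by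
  constructor
  · rintro ⟨i, hi, rfl⟩
    rw [add_assoc, ← Nat.cast_add, j_add w (by omega)]
    omega
  · rintro ⟨h1, h2⟩
    refine ⟨(x - w).val - r, by omega, ?_⟩
    rw [add_assoc, ← Nat.cast_add]
    have : r + ((x - w).val - r) = (x - w).val := by omega
    rw [this]; exact self_eq_add_val w x

lemma arc_one (a : ZMod n) : arc a 1 = {a} := by
  ext v
  constructor
  · rintro ⟨i, hi, rfl⟩
    interval_cases i; simp
  · rintro rfl; exact ⟨0, by omega, by simp⟩

lemma ncard_arc (a : ZMod n) {m : ℕ} (hm : m ≤ n) : (arc a m).ncard = m := by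
  have h : arc a m = (fun i : ℕ => a + (i : ZMod n)) '' (Set.Iio m) := by
    ext v; constructor
    · rintro ⟨i, hi, rfl⟩; exact ⟨i, hi, rfl⟩
    · rintro ⟨i, hi, rfl⟩; exact ⟨i, hi, rfl⟩
  rw [h, Set.ncard_image_of_injOn]
  · rw [show (Set.Iio m) = ((Finset.range m : Finset ℕ) : Set ℕ) by ext x; simp,
      Set.ncard_coe_finset, Finset.card_range]
  · intro i hi j hj hij
    simp only [Set.mem_Iio] at hi hj
    exact (addw_inj (by omega) (by omega)).1 hij

lemma wplus_add (w : ZMod n) (t s : ℕ) :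
    (w + (t : ZMod n)) + (s : ZMod n) = w + ((t + s : ℕ) : ZMod n) := by
  push_cast; ring

lemma wplus_one (w : ZMod n) (t : ℕ) :
    (w + (t : ZMod n)) + 1 = w + ((t + 1 : ℕ) : ZMod n) := by
  push_cast; ring

lemma wplus_sub_one (w : ZMod n) {t : ℕ} (ht : 1 ≤ t) :
    (w + (t : ZMod n)) - 1 = w + ((t - 1 : ℕ) : ZMod n) := by
  rw [show t = (t - 1) + 1 by omega, show (t-1)+1-1 = t-1 by omega]
  push_cast; ring

lemma w_sub_one (w : ZMod n) : w - 1 = w + ((n - 1 : ℕ) : ZMod n) := by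
  have h1 : 1 ≤ n := Nat.one_le_iff_ne_zero.2 (NeZero.ne n)
  rw [Nat.cast_sub h1]
  simp; ring

lemma cast_n_add (w : ZMod n) (c : ℕ) :
    w + ((n + c : ℕ) : ZMod n) = w + (c : ZMod n) := by
  push_cast; simp

/-- The normal form of a `T4`/`T5` occupancy set: small hole at `w`, first
island `w+1 .. w+p`, big hole `w+p+1 .. w+p+M`, second island `w-q .. w-1`. -/
def NF (w : ZMod n) (p q : ℕ) : Set (ZMod n) :=
  arc (w + ((1 : ℕ) : ZMod n)) p ∪ arc (w + ((n - q : ℕ) : ZMod n)) q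

lemma mem_NF {w : ZMod n} {p q : ℕ} (hq : 1 ≤ q) (hn : p + q + 3 ≤ n) (x : ZMod n) :
    x ∈ NF w p q ↔ 1 ≤ (x - w).val ∧ ((x - w).val ≤ p ∨ n - q ≤ (x - w).val) := by
  have hv := ZMod.val_lt (x - w)
  rw [NF, Set.mem_union, mem_arc_off w (by omega), mem_arc_off w (by omega)]
  omega

lemma mem_NF_nat {w : ZMod n} {p q : ℕ} (hq : 1 ≤ q) (hn : p + q + 3 ≤ n)
    {t : ℕ} (ht : t < n) :
    w + (t : ZMod n) ∈ NF w p q ↔ 1 ≤ t ∧ (t ≤ p ∨ n - q ≤ t) := by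
  rw [mem_NF hq hn, j_add w ht]

lemma isHole_NF_iff {w : ZMod n} {p q : ℕ} (hp : 1 ≤ p) (hq : 1 ≤ q)
    (hn : p + q + 3 ≤ n) (H : Set (ZMod n)) :
    IsHole (NF w p q) H ↔
      H = {w} ∨ H = arc (w + ((p + 1 : ℕ) : ZMod n)) (n - 1 - p - q) := by
  constructor
  · rintro ⟨a, m, hm, rfl, hemp, hend1, hend2⟩
    have hjalt : (a - w).val < n := ZMod.val_lt _
    have ha : a = w + (((a - w).val : ℕ) : ZMod n) := self_eq_add_val w a
    set ja := (a - w).val with hjadef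
    have hanot : a ∉ NF w p q := hemp a ⟨0, hm, by simp⟩
    rw [ha, mem_NF_nat hq hn hjalt] at hanot
    by_cases h0 : ja = 0
    · left
      have haw : a = w := by rw [ha, h0]; simp
      have hm1 : m = 1 := by
        by_contra hm1
        have h2 : w + ((1:ℕ) : ZMod n) ∈ arc a m := ⟨1, by omega, by rw [haw]⟩
        exact hemp _ h2 ((mem_NF_nat hq hn (by omega)).2 (by omega))
      rw [hm1, arc_one, haw]
    · have hrange : p + 1 ≤ ja ∧ ja ≤ n - q - 1 := by omega
      have hend1' := hend1
      rw [ha, wplus_sub_one w (by omega), mem_NF_nat hq hn (by omega)] at hend1'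
      have hjap : ja = p + 1 := by omega
      have hmM : m = n - 1 - p - q := by
        rcases Nat.lt_trichotomy m (n - 1 - p - q) with hlt | heq | hgt
        · exfalso
          have h2 := hend2
          rw [ha, wplus_add, mem_NF_nat hq hn (by omega)] at h2
          omega
        · exact heq
        · exfalso
          have h2 : a + ((n - 1 - p - q : ℕ) : ZMod n) ∈ arc a m :=
            ⟨n - 1 - p - q, hgt, rfl⟩
          have h3 := hemp _ h2
          rw [ha, wplus_add, mem_NF_nat hq hn (by omega)] at h3
          omega
      right
      rw [ha, hjap, hmM]
  · rintro (rfl | rfl)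
    · refine ⟨w, 1, one_pos, (arc_one w).symm, ?_, ?_, ?_⟩
      · rintro v rfl
        intro hv
        rw [mem_NF hq hn] at hv
        simp at hv
      · rw [w_sub_one, mem_NF_nat hq hn (by omega)]
        omega
      · rw [show ((1:ℕ) : ZMod n) = ((1:ℕ) : ZMod n) from rfl, Nat.cast_one,
          show w + 1 = w + ((1:ℕ) : ZMod n) by norm_cast,
          mem_NF_nat hq hn (by omega)]
        omega
    · refine ⟨w + ((p + 1 : ℕ) : ZMod n), n - 1 - p - q, by omega, rfl, ?_, ?_, ?_⟩
      · intro v hv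
        rw [mem_arc_off w (by omega)] at hv
        rw [mem_NF hq hn]
        omega
      · rw [wplus_sub_one w (by omega), mem_NF_nat hq hn (by omega)]
        omega
      · rw [wplus_add, mem_NF_nat hq hn (by omega)]
        omega

lemma isMaxHole_NF_iff {w : ZMod n} {p q : ℕ} (hp : 1 ≤ p) (hq : 1 ≤ q)
    (hn : p + q + 3 ≤ n) (H : Set (ZMod n)) :
    IsMaxHole (NF w p q) H ↔ H = arc (w + ((p + 1 : ℕ) : ZMod n)) (n - 1 - p - q) := by
  have hbig : IsHole (NF w p q) (arc (w + ((p + 1 : ℕ) : ZMod n)) (n - 1 - p - q)) :=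
    (isHole_NF_iff hp hq hn _).2 (Or.inr rfl)
  have hcardbig : (arc (w + ((p + 1 : ℕ) : ZMod n)) (n - 1 - p - q)).ncard = n - 1 - p - q :=
    ncard_arc _ (by omega)
  constructor
  · rintro ⟨hH, hmax⟩
    rcases (isHole_NF_iff hp hq hn _).1 hH with rfl | rfl
    · exfalso
      have := hmax _ hbig
      rw [hcardbig, Set.ncard_singleton] at this
      omega
    · rfl
  · rintro rfl
    refine ⟨hbig, ?_⟩
    intro H' hH'
    rcases (isHole_NF_iff hp hq hn _).1 hH' with rfl | rfl
    · rw [hcardbig, Set.ncard_singleton]; omega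
    · exact le_rfl

lemma jval (w u : ZMod n) (c : ℕ) :
    ((u + (c : ZMod n)) - w).val = ((u - w).val + c) % n := by
  conv_lhs => rw [self_eq_add_val w u]
  rw [wplus_add, add_sub_cancel_left, ZMod.val_natCast]

lemma pointEq (w : ZMod n) {x y : ZMod n} : x = y ↔ (x - w).val = (y - w).val := by
  constructor
  · rintro rfl; rfl
  · intro h
    rw [self_eq_add_val w x, self_eq_add_val w y, h]

lemma eq_ucast (w u : ZMod n) {t : ℕ} (ht : t < n) (c : ℕ) :
    (w + (t : ZMod n) = u + (c : ZMod n)) ↔ t = ((u - w).val + c) % n := by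
  rw [pointEq w, j_add w ht, jval]

lemma mod_small {a m : ℕ} (hm : 0 < m) (h : a < 2 * m) :
    (a < m ∧ a % m = a) ∨ (m ≤ a ∧ a % m = a - m) := by
  rcases Nat.lt_or_ge a m with h1 | h1
  · exact Or.inl ⟨h1, Nat.mod_eq_of_lt h1⟩
  · refine Or.inr ⟨h1, ?_⟩
    rw [Nat.mod_eq_sub_mod h1, Nat.mod_eq_of_lt (by omega)]

lemma not_O1_NF {w : ZMod n} {p q : ℕ} (hp : 1 ≤ p) (hq : 1 ≤ q)
    (hn : p + q + 3 ≤ n) : ¬ propO1 (NF w p q) := by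
  rintro ⟨u, hS⟩
  have hju := ZMod.val_lt (u - w)
  have A1 : w + ((1:ℕ) : ZMod n) ∈ NF w p q := (mem_NF_nat hq hn (by omega)).2 (by omega)
  have A2 : w + ((n-1:ℕ) : ZMod n) ∈ NF w p q := (mem_NF_nat hq hn (by omega)).2 (by omega)
  rw [hS, Set.mem_singleton_iff, show u = u + ((0:ℕ) : ZMod n) by simp,
    eq_ucast w u (by omega)] at A1 A2
  have m0 : ((u - w).val + 0) % n = (u - w).val := by
    rw [Nat.add_zero, Nat.mod_eq_of_lt hju]
  rw [m0] at A1 A2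
  omega

lemma not_O2_NF {w : ZMod n} {p q : ℕ} (hp : 1 ≤ p) (hq : 1 ≤ q)
    (hn : p + q + 3 ≤ n) : ¬ propO2 (NF w p q) := by
  rintro ⟨u, hS⟩
  have hju := ZMod.val_lt (u - w)
  have A0 : w + ((0:ℕ) : ZMod n) ∉ NF w p q := by
    rw [mem_NF_nat hq hn (by omega)]; omega
  have A1 : w + ((1:ℕ) : ZMod n) ∈ NF w p q := (mem_NF_nat hq hn (by omega)).2 (by omega)
  have A2 : w + ((n-1:ℕ) : ZMod n) ∈ NF w p q := (mem_NF_nat hq hn (by omega)).2 (by omega)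
  rw [hS, Set.mem_insert_iff, Set.mem_singleton_iff,
    show u = u + ((0:ℕ) : ZMod n) by simp] at A0 A1 A2
  rw [show u + ((0:ℕ) : ZMod n) + 1 = u + ((0:ℕ) : ZMod n) + ((1:ℕ) : ZMod n) by norm_cast,
    wplus_add] at A0 A1 A2
  rw [eq_ucast w u (by omega), eq_ucast w u (by omega)] at A0 A1 A2
  have m0 : ((u - w).val + 0) % n = (u - w).val := by
    rw [Nat.add_zero, Nat.mod_eq_of_lt hju]
  have m1 := mod_small (show 0 < n by omega) (show (u - w).val + (0+1) < 2*n by omega)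
  rw [m0] at A0 A1 A2
  rcases m1 with ⟨hc1, m1⟩ | ⟨hc1, m1⟩ <;> rw [m1] at A0 A1 A2 <;> omega

lemma not_O3_NF {w : ZMod n} {p q : ℕ} (hp : 1 ≤ p) (hq : 1 ≤ q)
    (hn : p + q + 3 ≤ n) : ¬ propO3 (NF w p q) := by
  rintro ⟨u, hS⟩
  have hju := ZMod.val_lt (u - w)
  have A0 : w + ((0:ℕ) : ZMod n) ∉ NF w p q := by
    rw [mem_NF_nat hq hn (by omega)]; omega
  have A1 : w + ((1:ℕ) : ZMod n) ∈ NF w p q := (mem_NF_nat hq hn (by omega)).2 (by omega)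
  have A2 : w + ((n-1:ℕ) : ZMod n) ∈ NF w p q := (mem_NF_nat hq hn (by omega)).2 (by omega)
  rw [hS, Set.mem_insert_iff, Set.mem_insert_iff, Set.mem_singleton_iff,
    show u = u + ((0:ℕ) : ZMod n) by simp] at A0 A1 A2
  rw [show u + ((0:ℕ) : ZMod n) + 1 = u + ((0:ℕ) : ZMod n) + ((1:ℕ) : ZMod n) by norm_cast,
    show u + ((0:ℕ) : ZMod n) + 2 = u + ((0:ℕ) : ZMod n) + ((2:ℕ) : ZMod n) by norm_cast,
    wplus_add, wplus_add] at A0 A1 A2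
  rw [eq_ucast w u (by omega), eq_ucast w u (by omega), eq_ucast w u (by omega)]
    at A0 A1 A2
  have m0 : ((u - w).val + 0) % n = (u - w).val := by
    rw [Nat.add_zero, Nat.mod_eq_of_lt hju]
  have m1 := mod_small (show 0 < n by omega) (show (u - w).val + (0+1) < 2*n by omega)
  have m2 := mod_small (show 0 < n by omega) (show (u - w).val + (0+2) < 2*n by omega)
  rw [m0] at A0 A1 A2
  rcases m1 with ⟨hc1, m1⟩ | ⟨hc1, m1⟩ <;> rcases m2 with ⟨hc2, m2⟩ | ⟨hc2, m2⟩ <;>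
    rw [m1, m2] at A0 A1 A2 <;> omega

lemma not_P_NF {w : ZMod n} {p q : ℕ} (hp : 1 ≤ p) (hq : 1 ≤ q)
    (hn : p + q + 3 ≤ n) (h3 : 3 ≤ p + q) : ¬ propP (NF w p q) := by
  rintro ⟨u, hS, -⟩
  have hju := ZMod.val_lt (u - w)
  have A0 : w + ((0:ℕ) : ZMod n) ∉ NF w p q := by
    rw [mem_NF_nat hq hn (by omega)]; omega
  have A1 : w + ((1:ℕ) : ZMod n) ∈ NF w p q := (mem_NF_nat hq hn (by omega)).2 (by omega)
  have A2 : w + ((n-1:ℕ) : ZMod n) ∈ NF w p q := (mem_NF_nat hq hn (by omega)).2 (by omega)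
  have m0 : ((u - w).val + 0) % n = (u - w).val := by
    rw [Nat.add_zero, Nat.mod_eq_of_lt hju]
  have m2 := mod_small (show 0 < n by omega) (show (u - w).val + (0+2) < 2*n by omega)
  rcases Nat.lt_or_ge p 2 with hple | hp2
  · have A3 : w + ((n-2:ℕ) : ZMod n) ∈ NF w p q :=
      (mem_NF_nat hq hn (by omega)).2 (by omega)
    rw [hS, Set.mem_insert_iff, Set.mem_singleton_iff,
      show u = u + ((0:ℕ) : ZMod n) by simp] at A0 A1 A2 A3
    rw [show u + ((0:ℕ) : ZMod n) + 2 = u + ((0:ℕ) : ZMod n) + ((2:ℕ) : ZMod n) by norm_cast,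
      wplus_add] at A0 A1 A2 A3
    rw [eq_ucast w u (by omega), eq_ucast w u (by omega)] at A0 A1 A2 A3
    rw [m0] at A0 A1 A2 A3
    rcases m2 with ⟨hc2, m2⟩ | ⟨hc2, m2⟩ <;> rw [m2] at A0 A1 A2 A3 <;> omega
  · have A3 : w + ((2:ℕ) : ZMod n) ∈ NF w p q :=
      (mem_NF_nat hq hn (by omega)).2 (by omega)
    rw [hS, Set.mem_insert_iff, Set.mem_singleton_iff,
      show u = u + ((0:ℕ) : ZMod n) by simp] at A0 A1 A2 A3
    rw [show u + ((0:ℕ) : ZMod n) + 2 = u + ((0:ℕ) : ZMod n) + ((2:ℕ) : ZMod n) by norm_cast,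
      wplus_add] at A0 A1 A2 A3
    rw [eq_ucast w u (by omega), eq_ucast w u (by omega)] at A0 A1 A2 A3
    rw [m0] at A0 A1 A2 A3
    rcases m2 with ⟨hc2, m2⟩ | ⟨hc2, m2⟩ <;> rw [m2] at A0 A1 A2 A3 <;> omega

lemma propH_NF {w : ZMod n} {p q : ℕ} (hp : 1 ≤ p) (hq : 1 ≤ q)
    (hn : p + q + 3 ≤ n) : propH (NF w p q) := by
  refine ⟨{w}, arc (w + ((p + 1 : ℕ) : ZMod n)) (n - 1 - p - q),
    (isHole_NF_iff hp hq hn _).2 (Or.inl rfl),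
    (isHole_NF_iff hp hq hn _).2 (Or.inr rfl), ?_, Set.ncard_singleton w, ?_, ?_⟩
  · intro h
    have := congrArg Set.ncard h
    rw [Set.ncard_singleton, ncard_arc _ (by omega)] at this
    omega
  · rw [ncard_arc _ (by omega)]; omega
  · intro H hH
    exact (isHole_NF_iff hp hq hn _).1 hH

lemma inT4_NF {w : ZMod n} {p q : ℕ} (hp : 1 ≤ p) (hq : 1 ≤ q)
    (hn : p + q + 3 ≤ n) (h3 : 3 ≤ p + q) : inT4 (NF w p q) :=
  ⟨propH_NF hp hq hn, not_P_NF hp hq hn h3, not_O3_NF hp hq hn,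
    not_O2_NF hp hq hn, not_O1_NF hp hq hn⟩

lemma propP_NF11 {w : ZMod n} (hn : 5 ≤ n) : propP (NF w 1 1) := by
  refine ⟨w + ((n-1:ℕ) : ZMod n), ?_, ?_⟩
  · ext x
    rw [mem_NF (le_refl 1) (by omega)]
    have hx := ZMod.val_lt (x - w)
    constructor
    · intro h
      have hx1 : (x - w).val = 1 ∨ (x - w).val = n - 1 := by omega
      rcases hx1 with h1 | h1
      · right
        rw [Set.mem_singleton_iff, show w + ((n-1:ℕ) : ZMod n) + 2
            = w + ((n-1:ℕ) : ZMod n) + ((2:ℕ) : ZMod n) by norm_cast, wplus_add,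
          show n - 1 + 2 = n + 1 by omega, cast_n_add]
        rw [self_eq_add_val w x, h1]
      · left
        rw [self_eq_add_val w x, h1]
    · rintro (h | h)
      · rw [h, j_add w (by omega)]
        omega
      · rw [Set.mem_singleton_iff] at h
        rw [show w + ((n-1:ℕ) : ZMod n) + 2
            = w + ((n-1:ℕ) : ZMod n) + ((2:ℕ) : ZMod n) by norm_cast, wplus_add,
          show n - 1 + 2 = n + 1 by omega, cast_n_add] at h
        rw [h, j_add w (by omega)]
        omega
  · rw [show w + ((n-1:ℕ) : ZMod n) + 1
        = w + ((n-1:ℕ) : ZMod n) + ((1:ℕ) : ZMod n) by norm_cast, wplus_add,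
      show n - 1 + 1 = n + 0 by omega, cast_n_add,
      mem_NF (le_refl 1) (by omega), j_add w (by omega)]
    omega

lemma inT5_NF11 {w : ZMod n} (hn : 6 ≤ n) : inT5 (NF w 1 1) :=
  ⟨propP_NF11 (by omega), not_O3_NF (le_refl 1) (le_refl 1) (by omega),
    not_O2_NF (le_refl 1) (le_refl 1) (by omega),
    not_O1_NF (le_refl 1) (le_refl 1) (by omega)⟩

lemma not_inT4_of_propP {S : Set (ZMod n)} (h : propP S) : ¬ inT4 S :=
  fun h4 => h4.2.1 h

lemma holeOfEmpty {S : Set (ZMod n)} (hS : S.Nonempty) {v : ZMod n} (hv : v ∉ S) :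
    ∃ H, IsHole S H ∧ v ∈ H := by
  obtain ⟨u, hu⟩ := hS
  have huv : u ≠ v := fun h => hv (h ▸ hu)
  have hA : ((u - v).val) ∈ {i : ℕ | 0 < i ∧ v + (i : ZMod n) ∈ S} := by
    constructor
    · exact Nat.pos_of_ne_zero (fun h0 => huv (by
        have : u - v = 0 := (ZMod.val_eq_zero _).1 h0
        have := sub_eq_zero.1 this
        exact this))
    · rw [← self_eq_add_val v u]; exact hu
  have hB : ((v - u).val) ∈ {i : ℕ | 0 < i ∧ v - (i : ZMod n) ∈ S} := by
    constructor
    · exact Nat.pos_of_ne_zero (fun h0 => huv (by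
        have : v - u = 0 := (ZMod.val_eq_zero _).1 h0
        exact (sub_eq_zero.1 this).symm))
    · rw [ZMod.natCast_val, ZMod.cast_id]
      have : v - (v - u) = u := by ring
      rw [this]; exact hu
  set f := sInf {i : ℕ | 0 < i ∧ v + (i : ZMod n) ∈ S} with hfdef
  set b := sInf {i : ℕ | 0 < i ∧ v - (i : ZMod n) ∈ S} with hbdef
  have hfmem := Nat.sInf_mem ⟨_, hA⟩
  have hbmem := Nat.sInf_mem ⟨_, hB⟩
  have hfpos : 0 < f := hfmem.1
  have hbpos : 0 < b := hbmem.1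
  refine ⟨arc (v - ((b - 1 : ℕ) : ZMod n)) (b - 1 + f),
    ⟨v - ((b - 1 : ℕ) : ZMod n), b - 1 + f, by omega, rfl, ?_, ?_, ?_⟩, ?_⟩
  · rintro x ⟨i, hi, rfl⟩
    rcases Nat.lt_or_ge i (b - 1) with hib | hib
    · have hx : v - ((b - 1 : ℕ) : ZMod n) + (i : ZMod n)
          = v - ((b - 1 - i : ℕ) : ZMod n) := by
        conv_lhs => rw [show b - 1 = (b - 1 - i) + i by omega]
        rw [Nat.cast_add]; ring
      rw [hx]
      intro hmem
      exact Nat.notMem_of_lt_sInf (show b - 1 - i < b by omega) ⟨by omega, hmem⟩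
    · have hx : v - ((b - 1 : ℕ) : ZMod n) + (i : ZMod n)
          = v + ((i - (b - 1) : ℕ) : ZMod n) := by
        conv_lhs => rw [show i = (b - 1) + (i - (b - 1)) by omega]
        rw [Nat.cast_add]; ring
      rw [hx]
      rcases Nat.eq_zero_or_pos (i - (b - 1)) with h0 | h0
      · rw [h0]; simpa using hv
      · intro hmem
        exact Nat.notMem_of_lt_sInf (show i - (b - 1) < f by omega) ⟨h0, hmem⟩
  · have : v - ((b - 1 : ℕ) : ZMod n) - 1 = v - (b : ZMod n) := by
      conv_rhs => rw [show b = (b - 1) + 1 by omega]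
      rw [Nat.cast_add]; push_cast; ring
    rw [this]; exact hbmem.2
  · have : v - ((b - 1 : ℕ) : ZMod n) + ((b - 1 + f : ℕ) : ZMod n) = v + (f : ZMod n) := by
      push_cast; ring
    rw [this]; exact hfmem.2
  · refine ⟨b - 1, by omega, ?_⟩
    push_cast; ring

lemma hole_len_lt {S H : Set (ZMod n)} (a : ZMod n) (m : ℕ)
    (hm : 0 < m) (hH : H = arc a m) (hemp : ∀ v ∈ H, v ∉ S)
    (hend : a + (m : ZMod n) ∈ S) : m < n := by
  have hn0 : 0 < n := Nat.pos_of_ne_zero (NeZero.ne n)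
  by_contra hc
  push_neg at hc
  have h1 : a + ((m - n : ℕ) : ZMod n) ∈ H := hH ▸ ⟨m - n, by omega, rfl⟩
  have h2 : a + ((m - n : ℕ) : ZMod n) = a + (m : ZMod n) := by
    conv_rhs => rw [show m = n + (m - n) by omega]
    rw [Nat.cast_add, ZMod.natCast_self, zero_add]
  exact hemp _ h1 (h2 ▸ hend)

lemma inT4_extract {S : Set (ZMod n)} (h : inT4 S) :
    ∃ (w : ZMod n) (p q : ℕ), 1 ≤ p ∧ 1 ≤ q ∧ 3 ≤ p + q ∧ p + q + 3 ≤ n ∧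
      S = NF w p q := by
  obtain ⟨⟨H₁, H₂, hH₁, hH₂, hne, hc1, hc2, huniq⟩, hnP, _, _, _⟩ := h
  obtain ⟨a₁, m₁, hm₁, hH1e, he₁, e1l, e1r⟩ := hH₁
  obtain ⟨a₂, m₂, hm₂, hH2e, he₂, e2l, e2r⟩ := hH₂
  have hm1n : m₁ < n := hole_len_lt a₁ m₁ hm₁ hH1e he₁ e1r
  have hm2n : m₂ < n := hole_len_lt a₂ m₂ hm₂ hH2e he₂ e2r
  have hm1one : m₁ = 1 := by
    have := hc1
    rw [hH1e, ncard_arc a₁ (by omega)] at this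
    exact this
  have hM2 : 2 ≤ m₂ := by
    have := hc2
    rw [hH2e, ncard_arc a₂ (by omega)] at this
    omega
  set w := a₁ with hwdef
  have hH1s : H₁ = {w} := by rw [hH1e, hm1one, arc_one]
  have hwS : w ∉ S := he₁ w (hH1s ▸ rfl)
  have hw1S : w + ((1:ℕ) : ZMod n) ∈ S := by
    have := e1r
    rw [hm1one] at this
    simpa using this
  have hwm1S : w - 1 ∈ S := e1l
  set ja := (a₂ - w).val with hjadef
  have hjan : ja < n := ZMod.val_lt _
  have ha₂ : a₂ = w + (ja : ZMod n) := self_eq_add_val w a₂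
  have hmemH₂ : ∀ i : ℕ, i < m₂ → w + ((ja + i : ℕ) : ZMod n) ∈ H₂ := by
    intro i hi
    rw [hH2e]
    exact ⟨i, hi, by rw [ha₂, wplus_add]⟩
  have ha₂S : a₂ ∉ S := he₂ a₂ (hH2e ▸ ⟨0, hm₂, by simp⟩)
  have hja1 : 1 ≤ ja := by
    rcases Nat.eq_zero_or_pos ja with h0 | h0
    · exfalso
      have : w + ((ja + 1 : ℕ) : ZMod n) ∈ H₂ := hmemH₂ 1 (by omega)
      rw [h0] at this
      exact he₂ _ this hw1S
    · exact h0
  have hja2 : 2 ≤ ja := by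
    rcases Nat.lt_or_ge ja 2 with h0 | h0
    · exfalso
      have hj1 : ja = 1 := by omega
      have := ha₂S
      rw [ha₂, hj1] at this
      exact this (by simpa using hw1S)
    · exact h0
  -- bound ja + m₂ ≤ n - 1
  have hjam : ja + m₂ ≤ n - 1 := by
    by_contra hc
    push_neg at hc
    rcases Nat.lt_or_ge (n + 1) (ja + m₂) with hbig | hsmall
    · -- w + 1 ∈ H₂
      have h1 : w + ((ja + (n - ja + 1) : ℕ) : ZMod n) ∈ H₂ := hmemH₂ _ (by omega)
      rw [show ja + (n - ja + 1) = n + 1 by omega] at h1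
      rw [cast_n_add] at h1
      exact he₂ _ h1 hw1S
    · rcases Nat.eq_or_lt_of_le hsmall with heq | hlt
      · -- ja + m₂ = n + 1 : w - 1 ∈ H₂
        have h1 : w + ((ja + (m₂ - 2) : ℕ) : ZMod n) ∈ H₂ := hmemH₂ _ (by omega)
        rw [show ja + (m₂ - 2) = n - 1 by omega, ← w_sub_one] at h1
        exact he₂ _ h1 hwm1S
      · -- ja + m₂ = n : endpoint is w ∈ S, contradiction
        have hn' : ja + m₂ = n := by omega
        have h1 : a₂ + ((m₂ : ℕ) : ZMod n) = w := by
          rw [ha₂, wplus_add, hn']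
          simp
        exact hwS (h1 ▸ e2r)
  set p := ja - 1 with hpdef
  set q := n - ja - m₂ with hqdef
  have hp1 : 1 ≤ p := by omega
  have hq1 : 1 ≤ q := by omega
  have hpqn : p + q + 3 ≤ n := by omega
  have hSne : S.Nonempty := ⟨_, hw1S⟩
  have hSNF : S = NF w p q := by
    ext x
    have hjx : (x - w).val < n := ZMod.val_lt _
    rw [mem_NF hq1 hpqn]
    constructor
    · intro hxS
      have hj0 : (x - w).val ≠ 0 := by
        intro h0
        have : x = w := by
          rw [self_eq_add_val w x, h0]; simp
        exact hwS (this ▸ hxS)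
      have hnotmid : ¬ (ja ≤ (x - w).val ∧ (x - w).val < ja + m₂) := by
        rintro ⟨hl, hr⟩
        have : w + ((ja + ((x - w).val - ja) : ℕ) : ZMod n) ∈ H₂ := hmemH₂ _ (by omega)
        rw [show ja + ((x - w).val - ja) = (x - w).val by omega,
          ← self_eq_add_val w x] at this
        exact he₂ _ this hxS
      omega
    · rintro ⟨hx1, hx2⟩
      by_contra hxS
      obtain ⟨H, hH, hxH⟩ := holeOfEmpty hSne hxS
      rcases huniq H hH with rfl | rfl
      · rw [hH1s] at hxH
        have : x = w := hxH
        rw [this] at hx1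
        simp at hx1
      · rw [hH2e] at hxH
        obtain ⟨i, hi, rfl⟩ := hxH
        rw [ha₂, wplus_add, j_add w (by omega)] at hx1 hx2
        omega
  refine ⟨w, p, q, hp1, hq1, ?_, hpqn, hSNF⟩
  by_contra hc
  push_neg at hc
  have hp1' : p = 1 := by omega
  have hq1' : q = 1 := by omega
  rw [hp1', hq1'] at hSNF
  exact hnP (hSNF ▸ propP_NF11 (by omega))

lemma j_add' (w : ZMod n) (t : ℕ) : ((w + (t : ZMod n)) - w).val = t % n := by
  rw [add_sub_cancel_left, ZMod.val_natCast]

lemma ne_point {w : ZMod n} {x : ZMod n} {t : ℕ} (ht : t < n) :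
    x = w + (t : ZMod n) ↔ (x - w).val = t := by
  rw [pointEq w, j_add w ht]

lemma occ_update {k : ℕ} (C : Config n k) (i : Fin k) (v : ZMod n) :
    occ (Function.update C i v) = insert v (C '' {j | j ≠ i}) := by
  ext x
  constructor
  · rintro ⟨j, rfl⟩
    by_cases h : j = i
    · subst h; left; rw [Function.update_self]
    · right; exact ⟨j, h, (Function.update_of_ne h _ _).symm⟩
  · rintro (rfl | ⟨j, hj, rfl⟩)
    · exact ⟨i, Function.update_self _ _ _⟩
    · exact ⟨j, Function.update_of_ne hj _ _⟩

lemma NF_drop_p {w : ZMod n} {p q : ℕ} (hp2 : 2 ≤ p) (hq : 1 ≤ q)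
    (hn : p + q + 3 ≤ n) :
    NF w (p-1) q = NF w p q \ {w + ((p:ℕ) : ZMod n)} := by
  ext x
  rw [Set.mem_diff, mem_NF hq (by omega), mem_NF hq hn, Set.mem_singleton_iff,
    ne_point (show p < n by omega)]
  omega

lemma NF_drop_q {w : ZMod n} {p q : ℕ} (hp : 1 ≤ p) (hq2 : 2 ≤ q)
    (hn : p + q + 3 ≤ n) :
    NF w p (q-1) = NF w p q \ {w + ((n-q:ℕ) : ZMod n)} := by
  ext x
  rw [Set.mem_diff, mem_NF (show 1 ≤ q - 1 by omega) (by omega), mem_NF (by omega) hn,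
    Set.mem_singleton_iff, ne_point (show n - q < n by omega)]
  omega

lemma M4_analysis {k : ℕ} {C C' : Config n k} {i : Fin k}
    {w : ZMod n} {p q : ℕ} (hp : 1 ≤ p) (hq : 1 ≤ q) (hn : p + q + 3 ≤ n)
    (hS : occ C = NF w p q)
    (d : ZMod n) (hd : Dir d) (H : Set (ZMod n)) (hmax : IsMaxHole (occ C) H)
    (hdH : C i + d ∈ H) (hocc : C i - d ∈ occ C)
    (hC' : C' = Function.update C i (C i - d)) :
    (2 ≤ p ∧ C i = w + ((p:ℕ) : ZMod n) ∧
      C' = Function.update C i (w + ((p-1:ℕ) : ZMod n))) ∨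
    (2 ≤ q ∧ C i = w + ((n-q:ℕ) : ZMod n) ∧
      C' = Function.update C i (w + ((n-q+1:ℕ) : ZMod n))) := by
  have hn0 : 0 < n := Nat.pos_of_ne_zero (NeZero.ne n)
  rw [hS] at hmax hocc
  have hHb := (isMaxHole_NF_iff hp hq hn H).1 hmax
  subst hHb
  have hCiS : C i ∈ NF w p q := hS ▸ ⟨i, rfl⟩
  have htn : (C i - w).val < n := ZMod.val_lt _
  have hCi : C i = w + (((C i - w).val : ℕ) : ZMod n) := self_eq_add_val w (C i)
  set t := (C i - w).val with htdef
  have htmem : 1 ≤ t ∧ (t ≤ p ∨ n - q ≤ t) := by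
    rw [mem_NF hq hn] at hCiS; exact hCiS
  rcases hd with rfl | rfl
  · -- d = 1
    have h1 : C i + 1 = w + ((t+1 : ℕ) : ZMod n) := by rw [hCi, wplus_one]
    rw [h1, mem_arc_off w (by omega), j_add' w] at hdH
    have hm := mod_small hn0 (show t + 1 < 2*n by omega)
    have htp : t = p := by
      rcases hm with ⟨h₁, h₂⟩ | ⟨h₁, h₂⟩ <;> rw [h₂] at hdH <;> omega
    have h2 : C i - 1 = w + ((t-1 : ℕ) : ZMod n) := by
      rw [hCi, wplus_sub_one w (by omega)]
    rw [h2, mem_NF_nat hq hn (by omega)] at hocc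
    left
    refine ⟨by omega, by rw [hCi, htp], ?_⟩
    rw [hC', h2, htp]
  · -- d = -1
    have h1 : C i + (-1) = w + ((t-1 : ℕ) : ZMod n) := by
      rw [← wplus_sub_one w (show 1 ≤ t by omega), ← hCi]; ring
    rw [h1, mem_arc_off w (by omega), j_add w (show t - 1 < n by omega)] at hdH
    have htq : t = n - q := by omega
    have h2 : C i - (-1) = w + ((t+1 : ℕ) : ZMod n) := by
      rw [← wplus_one w t, ← hCi]; ring
    rw [h2, mem_NF hq hn, j_add' w] at hocc
    have hm := mod_small hn0 (show t + 1 < 2*n by omega)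
    have hq2 : 2 ≤ q := by
      rcases hm with ⟨h₁, h₂⟩ | ⟨h₁, h₂⟩ <;> rw [h₂] at hocc <;> omega
    right
    refine ⟨hq2, by rw [hCi, htq], ?_⟩
    rw [hC', h2, htq, show n - q + 1 + 0 = n - q + 1 by omega]

lemma M4_occ {k : ℕ} {C C' : Config n k} {i : Fin k}
    {w : ZMod n} {p q : ℕ} (hp : 1 ≤ p) (hq : 1 ≤ q) (hn : p + q + 3 ≤ n)
    (hS : occ C = NF w p q) (hM : M4 C i C') :
    occ C' = NF w p q ∨ (2 ≤ p ∧ occ C' = NF w (p-1) q) ∨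
      (2 ≤ q ∧ occ C' = NF w p (q-1)) := by
  rcases hM with ⟨d, hd, ⟨H, hmax, hdH⟩, hocc, hC'⟩ | ⟨-, rfl⟩
  swap
  · left; exact hS
  rcases M4_analysis hp hq hn hS d hd H hmax hdH hocc hC' with
    ⟨hp2, hCieq, hC'eq⟩ | ⟨hq2, hCieq, hC'eq⟩
  · by_cases hmult : ∃ j : Fin k, j ≠ i ∧ C j = C i
    · left
      rw [hC'eq, occ_update]
      apply Set.Subset.antisymm
      · rintro x (rfl | ⟨j, hj, rfl⟩)
        · exact (mem_NF_nat hq hn (by omega)).2 (by omega)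
        · rw [← hS]; exact ⟨j, rfl⟩
      · intro x hx
        rw [← hS] at hx
        obtain ⟨j, rfl⟩ := hx
        by_cases hji : j = i
        · subst hji
          obtain ⟨j', hj', hj'eq⟩ := hmult
          right; exact ⟨j', hj', hj'eq⟩
        · right; exact ⟨j, hji, rfl⟩
    · push_neg at hmult
      right; left
      refine ⟨hp2, ?_⟩
      rw [hC'eq, occ_update, NF_drop_p hp2 hq hn]
      apply Set.Subset.antisymm
      · rintro x (rfl | ⟨j, hj, rfl⟩)
        · refine ⟨(mem_NF_nat hq hn (by omega)).2 (by omega), ?_⟩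
          rw [Set.mem_singleton_iff, ne_point (show p < n by omega),
            j_add w (show p - 1 < n by omega)]
          omega
        · refine ⟨hS ▸ ⟨j, rfl⟩, ?_⟩
          rw [Set.mem_singleton_iff, ← hCieq]
          exact hmult j hj
      · rintro x ⟨hxNF, hxne⟩
        rw [← hS] at hxNF
        obtain ⟨j, rfl⟩ := hxNF
        by_cases hji : j = i
        · subst hji
          exact absurd (Set.mem_singleton_iff.2 hCieq) hxne
        · right; exact ⟨j, hji, rfl⟩
  · by_cases hmult : ∃ j : Fin k, j ≠ i ∧ C j = C i
    · left
      rw [hC'eq, occ_update]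
      apply Set.Subset.antisymm
      · rintro x (rfl | ⟨j, hj, rfl⟩)
        · exact (mem_NF_nat hq hn (by omega)).2 (by omega)
        · rw [← hS]; exact ⟨j, rfl⟩
      · intro x hx
        rw [← hS] at hx
        obtain ⟨j, rfl⟩ := hx
        by_cases hji : j = i
        · subst hji
          obtain ⟨j', hj', hj'eq⟩ := hmult
          right; exact ⟨j', hj', hj'eq⟩
        · right; exact ⟨j, hji, rfl⟩
    · push_neg at hmult
      right; right
      refine ⟨hq2, ?_⟩
      rw [hC'eq, occ_update, NF_drop_q hp hq2 hn]
      apply Set.Subset.antisymm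
      · rintro x (rfl | ⟨j, hj, rfl⟩)
        · refine ⟨(mem_NF_nat hq hn (by omega)).2 (by omega), ?_⟩
          rw [Set.mem_singleton_iff, ne_point (show n - q < n by omega),
            j_add w (show n - q + 1 < n by omega)]
          omega
        · refine ⟨hS ▸ ⟨j, rfl⟩, ?_⟩
          rw [Set.mem_singleton_iff, ← hCieq]
          exact hmult j hj
      · rintro x ⟨hxNF, hxne⟩
        rw [← hS] at hxNF
        obtain ⟨j, rfl⟩ := hxNF
        by_cases hji : j = i
        · subst hji
          exact absurd (Set.mem_singleton_iff.2 hCieq) hxne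
        · right; exact ⟨j, hji, rfl⟩

lemma step_avoids {k : ℕ} {C C' : Config n k} {i : Fin k}
    {w : ZMod n} {p q : ℕ} (hp : 1 ≤ p) (hq : 1 ≤ q) (hn : p + q + 3 ≤ n)
    (hS : occ C = NF w p q) (hM : M4 C i C') (v : ZMod n)
    (hv : (2 ≤ p ∧ v = w + ((p:ℕ) : ZMod n)) ∨
      (2 ≤ q ∧ v = w + ((n-q:ℕ) : ZMod n))) :
    C' i ≠ v := by
  rcases hM with ⟨d, hd, ⟨H, hmax, hdH⟩, hocc, hC'⟩ | ⟨hnomove, rfl⟩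
  · rcases M4_analysis hp hq hn hS d hd H hmax hdH hocc hC' with
      ⟨hp2, hCieq, hC'eq⟩ | ⟨hq2, hCieq, hC'eq⟩ <;>
      rw [hC'eq, Function.update_self] <;>
      rcases hv with ⟨hv2, rfl⟩ | ⟨hv2, rfl⟩ <;>
      rw [Ne, addw_inj (by omega) (by omega)] <;> omega
  · -- the nil branch is impossible when the robot sits at `v`
    intro hCiv
    apply hnomove
    rcases hv with ⟨hp2, rfl⟩ | ⟨hq2, rfl⟩
    · refine ⟨1, Or.inl rfl, ⟨arc (w + ((p + 1 : ℕ) : ZMod n)) (n - 1 - p - q),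
        by rw [hS]; exact (isMaxHole_NF_iff hp hq hn _).2 rfl, ?_⟩, ?_⟩
      · rw [hCiv, wplus_one, mem_arc_off w (by omega), j_add w (by omega)]
        omega
      · rw [hS, hCiv, wplus_sub_one w (by omega), mem_NF_nat hq hn (by omega)]
        omega
    · refine ⟨-1, Or.inr rfl, ⟨arc (w + ((p + 1 : ℕ) : ZMod n)) (n - 1 - p - q),
        by rw [hS]; exact (isMaxHole_NF_iff hp hq hn _).2 rfl, ?_⟩, ?_⟩
      · rw [show ∀ z : ZMod n, z + (-1) = z - 1 from fun z => by ring, hCiv,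
          wplus_sub_one w (by omega), mem_arc_off w (by omega), j_add w (by omega)]
        omega
      · rw [show ∀ z : ZMod n, z - (-1) = z + 1 from fun z => by ring, hS, hCiv, wplus_one,
          mem_NF hq hn, j_add w (by omega)]
        omega

lemma sched_epoch {k : ℕ} (hk : 0 < k) {sched : ℕ → Fin k} {π : Equiv.Perm (Fin k)}
    (hπ : ∀ (t : ℕ) (h : t % k < k), sched t = π ⟨t % k, h⟩)
    {t₀ : ℕ} (ht₀ : t₀ % k = 0) {r : ℕ} (hr : r < k) :
    sched (t₀ + r) = π ⟨r, hr⟩ := by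
  have h1 : (t₀ + r) % k = r := by
    rw [Nat.add_mod, ht₀, Nat.zero_add, Nat.mod_mod_of_dvd r dvd_rfl,
      Nat.mod_eq_of_lt hr]
  rw [hπ (t₀ + r) (by rw [h1]; exact hr)]
  congr 1
  exact Fin.ext h1

lemma const_contra {k : ℕ} (hk : 0 < k) {sched : ℕ → Fin k} {π : Equiv.Perm (Fin k)}
    (hπ : ∀ (t : ℕ) (h : t % k < k), sched t = π ⟨t % k, h⟩)
    {E : ℕ → Config n k}
    (hstep : ∀ t, inT4 (occ (E t)) → M4 (E t) (sched t) (E (t + 1)))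
    {w : ZMod n} {t₀ p q : ℕ} (ht₀ : t₀ % k = 0)
    (hp : 1 ≤ p) (hq : 1 ≤ q) (hn : p + q + 3 ≤ n) (h3 : 3 ≤ p + q)
    (hconst : ∀ s, s ≤ k → occ (E (t₀ + s)) = NF w p q) : False := by
  obtain ⟨v, hv, hvNF⟩ : ∃ v, ((2 ≤ p ∧ v = w + ((p:ℕ) : ZMod n)) ∨
      (2 ≤ q ∧ v = w + ((n-q:ℕ) : ZMod n))) ∧ v ∈ NF w p q := by
    rcases Nat.lt_or_ge p 2 with h | h
    · exact ⟨w + ((n-q:ℕ) : ZMod n), Or.inr ⟨by omega, rfl⟩,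
        (mem_NF_nat hq hn (by omega)).2 (by omega)⟩
    · exact ⟨w + ((p:ℕ) : ZMod n), Or.inl ⟨h, rfl⟩,
        (mem_NF_nat hq hn (by omega)).2 (by omega)⟩
  have key : ∀ j : Fin k, E (t₀ + k) j ≠ v := by
    intro j
    have hrk : (π.symm j).val < k := (π.symm j).isLt
    set r := (π.symm j).val with hrdef
    have hjeq : j = π ⟨r, hrk⟩ := by
      rw [show (⟨r, hrk⟩ : Fin k) = π.symm j from Fin.ext rfl, Equiv.apply_symm_apply]
    have hsched : sched (t₀ + r) = j := by
      rw [sched_epoch hk hπ ht₀ hrk, ← hjeq]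
    have hT4r : inT4 (occ (E (t₀ + r))) := by
      rw [hconst r (le_of_lt hrk)]; exact inT4_NF hp hq hn h3
    have hM := hstep (t₀ + r) hT4r
    rw [hsched] at hM
    have havoid : E (t₀ + r + 1) j ≠ v :=
      step_avoids hp hq hn (hconst r (le_of_lt hrk)) hM v hv
    have stab : ∀ m, t₀ + r + 1 + m ≤ t₀ + k →
        E (t₀ + r + 1 + m) j = E (t₀ + r + 1) j := by
      intro m
      induction m with
      | zero => intro _; rfl
      | succ m ih =>
        intro hle
        have h4 : inT4 (occ (E (t₀ + r + 1 + m))) := by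
          have h5 := hconst (r + 1 + m) (by omega)
          rw [show t₀ + (r + 1 + m) = t₀ + r + 1 + m by omega] at h5
          rw [h5]; exact inT4_NF hp hq hn h3
        have hM' := hstep (t₀ + r + 1 + m) h4
        have hsne : sched (t₀ + r + 1 + m) ≠ j := by
          have hlt : r + 1 + m < k := by omega
          have h6 : sched (t₀ + r + 1 + m) = π ⟨r + 1 + m, hlt⟩ := by
            have h7 := sched_epoch hk hπ ht₀ hlt
            rw [show t₀ + (r + 1 + m) = t₀ + r + 1 + m by omega] at h7
            exact h7
          rw [h6, hjeq]
          intro hcon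
          have h8 := π.injective hcon
          rw [Fin.mk.injEq] at h8
          omega
        have heq : E (t₀ + r + 1 + (m+1)) j = E (t₀ + r + 1 + m) j := by
          rw [show t₀ + r + 1 + (m+1) = (t₀ + r + 1 + m) + 1 by omega]
          rcases hM' with ⟨d, hd, hh, ho2, hC'⟩ | ⟨-, hC'⟩
          · rw [hC', Function.update_of_ne (Ne.symm hsne)]
          · rw [hC']
        rw [heq]; exact ih (by omega)
    have hfin : E (t₀ + k) j = E (t₀ + r + 1) j := by
      have h9 := stab (k - r - 1) (by omega)
      rw [show t₀ + r + 1 + (k - r - 1) = t₀ + k by omega] at h9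
      exact h9
    rw [hfin]; exact havoid
  have hvocc : v ∈ occ (E (t₀ + k)) := by rw [hconst k le_rfl]; exact hvNF
  obtain ⟨j, hj⟩ := hvocc
  exact key j hj

lemma step_case {k : ℕ} {sched : ℕ → Fin k} {E : ℕ → Config n k}
    (hstep : ∀ t, inT4 (occ (E t)) → M4 (E t) (sched t) (E (t + 1)))
    {w : ZMod n} {t₀ r p' q' : ℕ}
    (hp' : 1 ≤ p') (hq' : 1 ≤ q') (hn' : p' + q' + 3 ≤ n) (h3' : 3 ≤ p' + q')
    (hoccr : occ (E (t₀ + r)) = NF w p' q') :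
    occ (E (t₀ + (r+1))) = NF w p' q' ∨
    (∃ p'' q'', 1 ≤ p'' ∧ 1 ≤ q'' ∧ p'' + q'' + 1 = p' + q' ∧ p'' + q'' + 3 ≤ n ∧
      occ (E (t₀ + (r+1))) = NF w p'' q'') := by
  have hT4 : inT4 (occ (E (t₀ + r))) := by
    rw [hoccr]; exact inT4_NF hp' hq' hn' h3'
  have hM := hstep (t₀ + r) hT4
  have hres := M4_occ hp' hq' hn' hoccr hM
  rw [show t₀ + (r+1) = t₀ + r + 1 by omega]
  rcases hres with h | ⟨h2, h⟩ | ⟨h2, h⟩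
  · exact Or.inl h
  · exact Or.inr ⟨p' - 1, q', by omega, hq', by omega, by omega, h⟩
  · exact Or.inr ⟨p', q' - 1, hp', by omega, by omega, by omega, h⟩

lemma epoch_progress {k : ℕ} (hk : 0 < k) {sched : ℕ → Fin k} {π : Equiv.Perm (Fin k)}
    (hπ : ∀ (t : ℕ) (h : t % k < k), sched t = π ⟨t % k, h⟩)
    {E : ℕ → Config n k}
    (hstep : ∀ t, inT4 (occ (E t)) → M4 (E t) (sched t) (E (t + 1)))
    {w : ZMod n} {t₀ p q : ℕ} (ht₀ : t₀ % k = 0)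
    (hp : 1 ≤ p) (hq : 1 ≤ q) (hn : p + q + 3 ≤ n) (h3 : 3 ≤ p + q)
    (hS : occ (E t₀) = NF w p q) :
    (∃ s, 0 < s ∧ s ≤ k ∧ (∀ s', s' < s → inT4 (occ (E (t₀ + s')))) ∧
       occ (E (t₀ + s)) = NF w 1 1) ∨
    (∃ p' q', 1 ≤ p' ∧ 1 ≤ q' ∧ 3 ≤ p' + q' ∧ p' + q' < p + q ∧
       occ (E (t₀ + k)) = NF w p' q' ∧ ∀ s, s ≤ k → inT4 (occ (E (t₀ + s)))) := by
  have main : ∀ r, r ≤ k →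
      (∃ s, 0 < s ∧ s ≤ r ∧ (∀ s', s' < s → inT4 (occ (E (t₀ + s')))) ∧
        occ (E (t₀ + s)) = NF w 1 1) ∨
      (∀ s, s ≤ r → occ (E (t₀ + s)) = NF w p q) ∨
      (∃ p' q', 1 ≤ p' ∧ 1 ≤ q' ∧ 3 ≤ p' + q' ∧ p' + q' < p + q ∧
        occ (E (t₀ + r)) = NF w p' q' ∧ ∀ s, s ≤ r → inT4 (occ (E (t₀ + s)))) := by
    intro r
    induction r with
    | zero =>
      intro _
      right; left
      intro s hs
      rw [Nat.le_zero.1 hs, Nat.add_zero]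
      exact hS
    | succ r ih =>
      intro hrk1
      rcases ih (by omega) with ⟨s, h1, h2, h3', h4⟩ | hconstr | hdrop
      · exact Or.inl ⟨s, h1, by omega, h3', h4⟩
      · rcases step_case hstep hp hq hn h3 (hconstr r le_rfl) with hsame |
          ⟨p'', q'', hp'', hq'', hsum, hn'', hocc''⟩
        · right; left
          intro s hs
          rcases Nat.lt_or_ge s (r+1) with h | h
          · exact hconstr s (by omega)
          · rw [show s = r + 1 by omega]
            exact hsame
        · by_cases hend : 3 ≤ p'' + q''
          · right; right
            refine ⟨p'', q'', hp'', hq'', hend, by omega, hocc'', ?_⟩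
            intro s hs
            rcases Nat.lt_or_ge s (r+1) with h | h
            · rw [hconstr s (by omega)]; exact inT4_NF hp hq hn h3
            · rw [show s = r + 1 by omega, hocc'']
              exact inT4_NF hp'' hq'' hn'' hend
          · left
            refine ⟨r + 1, by omega, by omega, ?_, ?_⟩
            · intro s' hs'
              rw [hconstr s' (by omega)]
              exact inT4_NF hp hq hn h3
            · rw [show p'' = 1 by omega, show q'' = 1 by omega] at hocc''
              exact hocc''
      · obtain ⟨p', q', hp', hq', h3', hlt', hoccr, hT4all⟩ := hdrop
        have hn' : p' + q' + 3 ≤ n := by omega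
        rcases step_case hstep hp' hq' hn' h3' hoccr with hsame |
          ⟨p'', q'', hp'', hq'', hsum, hn'', hocc''⟩
        · right; right
          refine ⟨p', q', hp', hq', h3', hlt', hsame, ?_⟩
          intro s hs
          rcases Nat.lt_or_ge s (r+1) with h | h
          · exact hT4all s (by omega)
          · rw [show s = r + 1 by omega, hsame]
            exact inT4_NF hp' hq' hn' h3'
        · by_cases hend : 3 ≤ p'' + q''
          · right; right
            refine ⟨p'', q'', hp'', hq'', hend, by omega, hocc'', ?_⟩
            intro s hs
            rcases Nat.lt_or_ge s (r+1) with h | h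
            · exact hT4all s (by omega)
            · rw [show s = r + 1 by omega, hocc'']
              exact inT4_NF hp'' hq'' hn'' hend
          · left
            refine ⟨r + 1, by omega, by omega, ?_, ?_⟩
            · intro s' hs'
              exact hT4all s' (by omega)
            · rw [show p'' = 1 by omega, show q'' = 1 by omega] at hocc''
              exact hocc''
  rcases main k le_rfl with hsucc | hconst | hdrop
  · exact Or.inl hsucc
  · exact (const_contra hk hπ hstep ht₀ hp hq hn h3 hconst).elim
  · exact Or.inr hdrop

lemma reach_T5 {k : ℕ} (hk : 0 < k) {sched : ℕ → Fin k} {π : Equiv.Perm (Fin k)}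
    (hπ : ∀ (t : ℕ) (h : t % k < k), sched t = π ⟨t % k, h⟩)
    {E : ℕ → Config n k}
    (hstep : ∀ t, inT4 (occ (E t)) → M4 (E t) (sched t) (E (t + 1)))
    (w : ZMod n) :
    ∀ N p q, p + q ≤ N → 1 ≤ p → 1 ≤ q → 3 ≤ p + q → p + q + 3 ≤ n →
      ∀ t₀, t₀ % k = 0 → occ (E t₀) = NF w p q →
      (∀ s, s < t₀ → inT4 (occ (E s))) →
      ∃ t, t ≤ t₀ + (p + q - 2) * k ∧ (∀ s, s < t → inT4 (occ (E s))) ∧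
        occ (E t) = NF w 1 1 := by
  intro N
  induction N with
  | zero =>
    intro p q hN hp _ _ _ _ _ _ _
    exact absurd hN (by omega)
  | succ N ih =>
    intro p q hN hp hq h3 hn t₀ ht₀ hS hpre
    rcases epoch_progress hk hπ hstep ht₀ hp hq hn h3 hS with
      ⟨s, hs0, hsk, hsT4, hsNF⟩ | ⟨p', q', hp', hq', h3', hlt, hocck, hT4all⟩
    · refine ⟨t₀ + s, ?_, ?_, hsNF⟩
      · have h1 : 1 ≤ p + q - 2 := by omega
        have h2 := Nat.mul_le_mul_right k h1
        omega
      · intro s' hs'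
        rcases Nat.lt_or_ge s' t₀ with h | h
        · exact hpre s' h
        · rw [show s' = t₀ + (s' - t₀) by omega]
          exact hsT4 (s' - t₀) (by omega)
    · have hn'' : p' + q' + 3 ≤ n := by omega
      have hpre' : ∀ s, s < t₀ + k → inT4 (occ (E s)) := by
        intro s hs
        rcases Nat.lt_or_ge s t₀ with h | h
        · exact hpre s h
        · have h10 := hT4all (s - t₀) (by omega)
          rw [show t₀ + (s - t₀) = s by omega] at h10
          exact h10
      obtain ⟨t, htb, htpre, htNF⟩ := ih p' q' (by omega) hp' hq' h3' hn'' (t₀ + k)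
        (by rw [Nat.add_mod_right]; exact ht₀) hocck hpre'
      refine ⟨t, ?_, htpre, htNF⟩
      have h1 : (p' + q' - 2) + 1 ≤ p + q - 2 := by omega
      have h2 : ((p' + q' - 2) + 1) * k ≤ (p + q - 2) * k := Nat.mul_le_mul_right k h1
      have h3'' : k + (p' + q' - 2) * k = ((p' + q' - 2) + 1) * k := by ring
      omega

end Statics

/-- let `C` be a configuration in task `T4`.  In any execution
under any Round Robin scheduler (and adversarial choices) in which every robot
activated in a configuration in `T4` executes move `m4`, the first configuration
not in `T4` occurs within at most `n - 5` epochs (an epoch being `k` rounds),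
and it is in task `T5`. -/
theorem stmt12 (n k : ℕ) (hn : 3 ≤ n) (C : Config n k)
    (hC : inT4 (occ C))
    (sched : ℕ → Fin k) (hRR : IsRoundRobin sched)
    (E : ℕ → Config n k) (hE0 : E 0 = C)
    (hstep : ∀ t, inT4 (occ (E t)) → M4 (E t) (sched t) (E (t + 1))) :
    ∃ t, t ≤ (n - 5) * k ∧ (∀ s < t, inT4 (occ (E s))) ∧ ¬ inT4 (occ (E t)) ∧
      inT5 (occ (E t)) := by
  haveI : NeZero n := ⟨by omega⟩
  have hC0 : inT4 (occ (E 0)) := by rw [hE0]; exact hC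
  obtain ⟨w, p, q, hp, hq, h3, hn', hS⟩ := inT4_extract hC0
  have hk : 0 < k := by
    have hw1 : w + ((1:ℕ) : ZMod n) ∈ occ (E 0) := by
      rw [hS]; exact (mem_NF_nat hq hn' (by omega)).2 (by omega)
    obtain ⟨i, -⟩ := hw1
    exact i.pos
  obtain ⟨π, hπ⟩ := hRR
  obtain ⟨t, htb, htpre, htNF⟩ := reach_T5 hk hπ hstep w (p+q) p q le_rfl hp hq h3 hn'
    0 (Nat.zero_mod k) hS (fun s hs => absurd hs (Nat.not_lt_zero s))
  refine ⟨t, ?_, htpre, ?_, ?_⟩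
  · have h1 : p + q - 2 ≤ n - 5 := by omega
    have h2 := Nat.mul_le_mul_right k h1
    omega
  · rw [htNF]
    exact not_inT4_of_propP (propP_NF11 (by omega))
  · rw [htNF]
    exact inT5_NF11 (by omega)

end RobotRing
end

section
/- Let C be a configuration of k robots on an n-ring that is in task T5. Consider any execution under any Round Robin scheduler and adversarial choices in which every robot activated in a configuration in T5 executes move m5. Then after the very first move performed from C (which occurs at the first activation), the resulting configuration is in task T6 or in task T7. -/
/-!
Robots on an anonymous `n`-ring (the cycle on `ZMod n`).  A configuration of `k`
robots is a function `Fin k → ZMod n` (several robots may share a vertex: a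
multiplicity).  Robots are anonymous, oblivious and disoriented: an algorithm
only sees the set of occupied vertices expressed as offsets in the robot's own
local frame, whose orientation (reflection) is chosen by the adversary at each
activation.  A sequential scheduler activates one robot per round.
-/

namespace RobotRing

/-- let `C` be a configuration in task `T5`.  In any execution
under any Round Robin scheduler (and adversarial choices) in which every robot
activated in a configuration in `T5` executes move `m5`, the configuration
resulting from the very first move performed from `C` (at the first activation)
is in task `T6` or in task `T7`. -/
theorem stmt13 (n k : ℕ) (hn : 3 ≤ n) (C : Config n k)
    (hC : inT5 (occ C))
    (sched : ℕ → Fin k) (hRR : IsRoundRobin sched)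
    (E : ℕ → Config n k) (hE0 : E 0 = C)
    (hstep : ∀ t, inT5 (occ (E t)) → M5 (E t) (sched t) (E (t + 1))) :
    inT6 (occ (E 1)) ∨ inT7 (occ (E 1)) := by
  haveI : NeZero n := ⟨by omega⟩
  have h1 : (1 : ZMod n) ≠ 0 := by
    intro h
    have : n ∣ 1 := (ZMod.natCast_eq_zero_iff 1 n).mp (by exact_mod_cast h)
    have := Nat.le_of_dvd one_pos this
    omega
  have h2 : (2 : ZMod n) ≠ 0 := by
    intro h
    have : n ∣ 2 := (ZMod.natCast_eq_zero_iff 2 n).mp (by exact_mod_cast h)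
    have := Nat.le_of_dvd two_pos this
    omega
  obtain ⟨u, hoccu, hu1⟩ := hC.1
  have hM5 : M5 (E 0) (sched 0) (E 1) := hstep 0 (by rw [hE0]; exact hC)
  rw [hE0] at hM5
  obtain ⟨d, hd, hwno, hzyes, hE1⟩ := hM5
  set i := sched 0 with hi
  set v := C i with hv
  set w := v + d with hw
  set z := w + d with hz
  -- basic arithmetic facts
  have hd0 : d ≠ 0 := by
    rcases hd with h | h <;> rw [h]
    · exact h1
    · simpa using h1
  have hdd0 : d + d ≠ 0 := by
    rcases hd with h | h <;> rw [h]
    · intro hc; exact h2 (by rw [← hc]; ring)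
    · intro hc
      apply h2
      have : -(2 : ZMod n) = 0 := by rw [← hc]; ring
      simpa using this
  have hvw : v ≠ w := by
    intro hc; apply hd0
    have : v + 0 = v + d := by rw [add_zero, ← hw, hc]
    exact (add_left_cancel this).symm
  have hwz : w ≠ z := by
    intro hc; apply hd0
    have : w + 0 = w + d := by rw [add_zero, ← hz, hc]
    exact (add_left_cancel this).symm
  have hzv : z = v + (d + d) := by rw [hz, hw]; ring
  have hvz : v ≠ z := by
    intro hc; apply hdd0
    have : v + 0 = v + (d + d) := by rw [add_zero]; rw [hzv] at hc; exact hc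
    exact (add_left_cancel this).symm
  have hvocc : v ∈ occ C := ⟨i, rfl⟩
  -- occ C = {v, z}
  have huu2 : u ≠ u + 2 := by
    intro hc; apply h2
    have : u + 0 = u + 2 := by rw [add_zero]; exact hc
    exact (add_left_cancel this).symm
  have hoccvz : occ C = {v, z} := by
    rw [hoccu]
    rw [hoccu] at hvocc hzyes
    simp only [Set.mem_insert_iff, Set.mem_singleton_iff] at hvocc hzyes
    rcases hvocc with hv' | hv' <;> rcases hzyes with hz' | hz'
    · exact absurd (hv'.trans hz'.symm) hvz
    · rw [← hz', ← hv']
    · rw [← hv', ← hz', Set.pair_comm]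
    · exact absurd (hv'.trans hz'.symm) hvz
  -- members of occ (E 1)
  have hwE1 : w ∈ occ (E 1) := ⟨i, by rw [hE1]; exact Function.update_self i w C⟩
  have hzE1 : z ∈ occ (E 1) := by
    have hzC : z ∈ occ C := hzyes
    obtain ⟨j, hj⟩ := hzC
    have hji : j ≠ i := by intro hc; rw [hc] at hj; exact hvz hj
    exact ⟨j, by rw [hE1]; rw [Function.update_of_ne hji]; exact hj⟩
  have hsub : occ (E 1) ⊆ {w, v, z} := by
    rintro x ⟨j, hj⟩
    rw [hE1] at hj
    by_cases hji : j = i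
    · left; rw [hji, Function.update_self] at hj; exact hj.symm
    · right
      rw [Function.update_of_ne hji] at hj
      have : x ∈ occ C := ⟨j, hj⟩
      rw [hoccvz] at this
      exact this
  have hwocc : w ∉ occ C := hwno
  by_cases hvin : v ∈ occ (E 1)
  · -- three consecutive occupied vertices: T6
    left
    have hset : occ (E 1) = {v, w, z} := by
      ext x
      constructor
      · intro hx
        rcases hsub hx with h | h | h
        · right; left; exact h
        · left; exact h
        · right; right; exact h
      · rintro (h | h | h) <;> subst h
        · exact hvin
        · exact hwE1
        · exact hzE1
    have ho3 : propO3 (occ (E 1)) := by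
      rcases hd with h | h
      · refine ⟨v, ?_⟩
        have e1 : v + 1 = w := by rw [hw, h]
        have e2 : v + 2 = z := by rw [hz, hw, h]; ring
        rw [hset, e1, e2]
      · refine ⟨z, ?_⟩
        have e1 : z + 1 = w := by rw [hz, h]; ring
        have e2 : z + 2 = v := by rw [hz, hw, h]; ring
        rw [hset, e1, e2]
        ext x; simp; tauto
    refine ⟨ho3, ?_, ?_⟩
    · rintro ⟨a, ha⟩
      rw [hset] at ha
      have hva : v ∈ ({a, a + 1} : Set (ZMod n)) := by rw [← ha]; simp
      have hwa : w ∈ ({a, a + 1} : Set (ZMod n)) := by rw [← ha]; simp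
      have hza : z ∈ ({a, a + 1} : Set (ZMod n)) := by rw [← ha]; simp
      simp only [Set.mem_insert_iff, Set.mem_singleton_iff] at hva hwa hza
      rcases hva with h' | h' <;> rcases hwa with h'' | h'' <;> rcases hza with h''' | h''' <;>
        first
          | exact hvw (h'.trans h''.symm)
          | exact hwz (h''.trans h'''.symm)
          | exact hvz (h'.trans h'''.symm)
    · rintro ⟨a, ha⟩
      rw [hset] at ha
      have hva : v = a := by
        have : v ∈ ({a} : Set (ZMod n)) := by rw [← ha]; simp
        exact this
      have hwa : w = a := by
        have : w ∈ ({a} : Set (ZMod n)) := by rw [← ha]; simp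
        exact this
      exact hvw (hva.trans hwa.symm)
  · -- two adjacent occupied vertices: T7
    right
    have hset : occ (E 1) = {w, z} := by
      ext x
      constructor
      · intro hx
        rcases hsub hx with h | h | h
        · left; exact h
        · exact absurd (h ▸ hx) hvin
        · right; exact h
      · rintro (h | h) <;> subst h
        · exact hwE1
        · exact hzE1
    have ho2 : propO2 (occ (E 1)) := by
      rcases hd with h | h
      · exact ⟨w, by rw [hset, hz, h]⟩
      · refine ⟨z, ?_⟩
        have e1 : z + 1 = w := by rw [hz, h]; ring
        rw [hset, e1, Set.pair_comm]
    refine ⟨ho2, ?_⟩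
    rintro ⟨a, ha⟩
    rw [hset] at ha
    have hwa : w = a := by
      have : w ∈ ({a} : Set (ZMod n)) := by rw [← ha]; simp
      exact this
    have hza : z = a := by
      have : z ∈ ({a} : Set (ZMod n)) := by rw [← ha]; simp
      exact this
    exact hwz (hwa.trans hza.symm)

end RobotRing
end
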